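/- arXiv:math/0508570 — 4 statements merged into one kernel-verified Lean document; each statement's English description precedes it below -/
import Mathlib

section
/- For all integers n ≥ 1 and all k ≥ 0, the coefficients Q_{j,k,m} satisfy the recursions Q_{0,k,2n+1} = (n+k)·Q_{0,k,2n} + (n−k+1)·Q_{0,k−1,2n} and Q_{1,k,2n+1} = Q_{0,k,2n} + (n+k+1)·Q_{1,k,2n} + (n−k+1)·Q_{1,k−1,2n}, where by convention Q_{j,−1,m} = 0. -/
namespace DescentParity

/-- Number of descent positions i (1-indexed adjacent pairs) of a permutation of {1,…,m}
    whose first (larger) entry is even. Entries of `Fin m` represent values via `(·:ℕ)+1`. -/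
def desBegE (m : ℕ) (σ : Equiv.Perm (Fin m)) : ℕ :=
  (Finset.univ.filter (fun p : Fin m × Fin m =>
    (p.2 : ℕ) = (p.1 : ℕ) + 1 ∧ σ p.2 < σ p.1 ∧ Even ((σ p.1 : ℕ) + 1))).card

def desEndE (m : ℕ) (σ : Equiv.Perm (Fin m)) : ℕ :=
  (Finset.univ.filter (fun p : Fin m × Fin m =>
    (p.2 : ℕ) = (p.1 : ℕ) + 1 ∧ σ p.2 < σ p.1 ∧ Even ((σ p.2 : ℕ) + 1))).card

def desBegO (m : ℕ) (σ : Equiv.Perm (Fin m)) : ℕ :=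
  (Finset.univ.filter (fun p : Fin m × Fin m =>
    (p.2 : ℕ) = (p.1 : ℕ) + 1 ∧ σ p.2 < σ p.1 ∧ Odd ((σ p.1 : ℕ) + 1))).card

def desEndO (m : ℕ) (σ : Equiv.Perm (Fin m)) : ℕ :=
  (Finset.univ.filter (fun p : Fin m × Fin m =>
    (p.2 : ℕ) = (p.1 : ℕ) + 1 ∧ σ p.2 < σ p.1 ∧ Odd ((σ p.2 : ℕ) + 1))).card

/-- The first entry σ₁ of the permutation is even. -/
def firstEven (m : ℕ) (σ : Equiv.Perm (Fin m)) : Prop :=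
  ∃ i : Fin m, (i : ℕ) = 0 ∧ Even ((σ i : ℕ) + 1)

def firstOdd (m : ℕ) (σ : Equiv.Perm (Fin m)) : Prop :=
  ∃ i : Fin m, (i : ℕ) = 0 ∧ Odd ((σ i : ℕ) + 1)

instance (m : ℕ) (σ : Equiv.Perm (Fin m)) : Decidable (firstEven m σ) := by
  unfold firstEven; infer_instance

instance (m : ℕ) (σ : Equiv.Perm (Fin m)) : Decidable (firstOdd m σ) := by
  unfold firstOdd; infer_instance

def R (k m : ℕ) : ℕ :=
  (Finset.univ.filter (fun σ : Equiv.Perm (Fin m) => desBegE m σ = k)).card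

def M (k m : ℕ) : ℕ :=
  (Finset.univ.filter (fun σ : Equiv.Perm (Fin m) => desBegO m σ = k)).card

def P0 (k m : ℕ) : ℕ :=
  (Finset.univ.filter (fun σ : Equiv.Perm (Fin m) => firstOdd m σ ∧ desEndE m σ = k)).card

def P1 (k m : ℕ) : ℕ :=
  (Finset.univ.filter (fun σ : Equiv.Perm (Fin m) => firstEven m σ ∧ desEndE m σ = k)).card

def Q0 (k m : ℕ) : ℕ :=
  (Finset.univ.filter (fun σ : Equiv.Perm (Fin m) => firstEven m σ ∧ desEndO m σ = k)).card

def Q1 (k m : ℕ) : ℕ :=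
  (Finset.univ.filter (fun σ : Equiv.Perm (Fin m) => firstOdd m σ ∧ desEndO m σ = k)).card



section Dev
open Equiv Finset
variable {m : ℕ}

def ins (σ : Perm (Fin m)) (p : Fin (m+1)) : Perm (Fin (m+1)) :=
  (finSuccEquiv' p).trans ((σ.optionCongr).trans (finSuccEquiv' (Fin.last m)).symm)

lemma ins_self (σ : Perm (Fin m)) (p : Fin (m+1)) : ins σ p p = Fin.last m := by
  simp [ins, finSuccEquiv'_at]

lemma ins_succAbove (σ : Perm (Fin m)) (p : Fin (m+1)) (i : Fin m) :
    ins σ p (p.succAbove i) = (σ i).castSucc := by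
  simp [ins, finSuccEquiv'_succAbove, ← Fin.succAbove_last]

def pos (τ : Perm (Fin (m+1))) : Fin (m+1) := τ⁻¹ (Fin.last m)

def ret (τ : Perm (Fin (m+1))) : Perm (Fin m) :=
  Equiv.removeNone ((finSuccEquiv' (pos τ)).symm.trans ((τ : Fin (m+1) ≃ Fin (m+1)).trans (finSuccEquiv' (Fin.last m))))

lemma pos_ins (σ : Perm (Fin m)) (p : Fin (m+1)) : pos (ins σ p) = p := by
  have := ins_self σ p
  simp [pos, ← this]

lemma ret_apply (τ : Perm (Fin (m+1))) (i : Fin m) :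
    (ret τ i : Fin m).castSucc = τ ((pos τ).succAbove i) := by
  have hne : τ ((pos τ).succAbove i) ≠ Fin.last m := by
    intro h
    have : (pos τ).succAbove i = pos τ := by
      apply τ.injective
      rw [h]
      simp [pos]
    exact Fin.succAbove_ne _ i this
  obtain ⟨j, hj⟩ := Fin.exists_castSucc_eq.2 hne
  have h : ((finSuccEquiv' (pos τ)).symm.trans ((τ : Fin (m+1) ≃ Fin (m+1)).trans (finSuccEquiv' (Fin.last m)))) (some i) = some j := by
    simp only [Equiv.trans_apply, finSuccEquiv'_symm_some]
    rw [← hj, ← Fin.succAbove_last, finSuccEquiv'_succAbove]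
  have h2 := Equiv.removeNone_some _ ⟨j, h⟩
  rw [h] at h2
  have : ret τ i = j := Option.some_injective _ h2
  rw [this, hj]

lemma ret_ins (σ : Perm (Fin m)) (p : Fin (m+1)) : ret (ins σ p) = σ := by
  ext i
  have := ret_apply (ins σ p) i
  rw [pos_ins, ins_succAbove] at this
  exact congrArg Fin.val (Fin.castSucc_injective _ this)

lemma ins_ret (τ : Perm (Fin (m+1))) : ins (ret τ) (pos τ) = τ := by
  ext x
  rcases eq_or_ne x (pos τ) with rfl | hx
  · rw [ins_self]; simp [pos]
  · obtain ⟨i, rfl⟩ := Fin.exists_succAbove_eq hx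
    rw [ins_succAbove, ret_apply]

def pr (j : Fin m) : Fin m := ⟨(j:ℕ) - 1, by have := j.isLt; omega⟩

lemma pr_val (j : Fin m) : (pr j : ℕ) = (j:ℕ) - 1 := rfl

def iota (σ : Perm (Fin m)) (j : Fin m) : ℕ :=
  if 0 < (j:ℕ) ∧ σ j < σ (pr j) ∧ Odd ((σ j : ℕ) + 1) then 1 else 0

def aI (σ : Perm (Fin m)) (j : Fin m) : ℕ := if Odd ((σ j : ℕ) + 1) then 1 else 0

lemma card_filter_ins (P : Perm (Fin (m+1)) → Prop) [DecidablePred P] :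
    (univ.filter P).card
      = (univ.filter fun x : Perm (Fin m) × Fin (m+1) => P (ins x.1 x.2)).card := by
  apply Finset.card_nbij' (i := fun τ => (ret τ, pos τ)) (j := fun x => ins x.1 x.2)
  · intro τ hτ
    simp only [Finset.mem_coe, Finset.mem_filter, Finset.mem_univ, true_and] at *
    rwa [ins_ret]
  · intro x hx
    simp only [Finset.mem_coe, Finset.mem_filter, Finset.mem_univ, true_and] at *
    exact hx
  · intro τ _
    simp [ins_ret]
  · intro x _
    simp [ret_ins, pos_ins]

lemma card_filter_prod {α β : Type*} [Fintype α] [Fintype β]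
    (P : α → β → Prop) [∀ a b, Decidable (P a b)] :
    (univ.filter fun x : α × β => P x.1 x.2).card
      = ∑ a : α, (univ.filter fun b => P a b).card := by
  rw [Finset.card_filter, Fintype.sum_prod_type]
  exact Finset.sum_congr rfl fun a _ => (Finset.card_filter _ _).symm

lemma sum_iota (σ : Perm (Fin m)) : desEndO m σ = ∑ j, iota σ j := by
  unfold desEndO iota
  rw [Finset.card_nbij' (i := fun x : Fin m × Fin m => x.2) (j := fun j : Fin m => (pr j, j))
    (t := univ.filter (fun j : Fin m => 0 < (j:ℕ) ∧ σ j < σ (pr j) ∧ Odd ((σ j : ℕ) + 1)))]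
  · exact Finset.card_filter _ _
  · rintro ⟨a, b⟩ hab
    simp only [Finset.mem_coe, Finset.mem_filter, Finset.mem_univ, true_and] at *
    obtain ⟨h1, h2, h3⟩ := hab
    have hpr : pr b = a := by
      apply Fin.ext; rw [pr_val, h1]; omega
    exact ⟨by omega, by rwa [hpr], h3⟩
  · intro j hj
    simp only [Finset.mem_coe, Finset.mem_filter, Finset.mem_univ, true_and] at *
    obtain ⟨h1, h2, h3⟩ := hj
    refine ⟨?_, h2, h3⟩
    rw [pr_val]; omega
  · rintro ⟨a, b⟩ hab
    simp only [Finset.mem_coe, Finset.mem_filter, Finset.mem_univ, true_and] at hab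
    have hpr : pr b = a := by
      apply Fin.ext; rw [pr_val, hab.1]; omega
    simp [hpr]
  · intro j _
    rfl

lemma iota_le_aI (σ : Perm (Fin m)) (j : Fin m) : iota σ j ≤ aI σ j := by
  unfold iota aI
  split_ifs with h1 h2 <;> simp_all <;> omega

lemma iota_zero (σ : Perm (Fin m)) (j : Fin m) (hj : (j:ℕ) = 0) : iota σ j = 0 := by
  unfold iota
  rw [if_neg]
  rintro ⟨h, -⟩
  omega

lemma iota_ins_succAbove (σ : Perm (Fin m)) (p : Fin (m+1)) (i : Fin m) :
    iota (ins σ p) (p.succAbove i) = if (i:ℕ) = (p:ℕ) then aI σ i else iota σ i := by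
  have e1 : ins σ p (p.succAbove i) = (σ i).castSucc := ins_succAbove σ p i
  rcases Nat.lt_trichotomy (i:ℕ) (p:ℕ) with hlt | heq | hgt
  · -- i < p : position unchanged
    have hsa : p.succAbove i = i.castSucc :=
      Fin.succAbove_of_castSucc_lt _ _ (by rw [Fin.lt_iff_val_lt_val]; simpa)
    have hv : ((p.succAbove i : Fin (m+1)) : ℕ) = (i:ℕ) := by rw [hsa]; simp
    rw [if_neg (by omega)]
    by_cases h0 : 0 < (i:ℕ)
    · have hpri : p.succAbove (pr i) = (pr i).castSucc :=
        Fin.succAbove_of_castSucc_lt _ _ (by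
          rw [Fin.lt_iff_val_lt_val]; simp only [Fin.coe_castSucc, pr_val]; omega)
      have hpr : pr (p.succAbove i) = p.succAbove (pr i) := by
        apply Fin.ext
        rw [pr_val, hv, hpri]
        simp [pr_val]
      have e2 : ins σ p (pr (p.succAbove i)) = (σ (pr i)).castSucc := by
        rw [hpr, ins_succAbove]
      unfold iota
      rw [e1, e2, hv]
      simp only [Fin.coe_castSucc, Fin.castSucc_lt_castSucc_iff]
    · rw [iota_zero _ _ (by omega), iota_zero _ _ (by omega)]
  · -- i = p : new descent position
    have hsa : p.succAbove i = i.succ :=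
      Fin.succAbove_of_le_castSucc _ _ (by rw [Fin.le_def]; simp; omega)
    have hv : ((p.succAbove i : Fin (m+1)) : ℕ) = (i:ℕ) + 1 := by rw [hsa]; simp
    have hpr : pr (p.succAbove i) = p := by
      apply Fin.ext; rw [pr_val, hv]; omega
    have e2 : ins σ p (pr (p.succAbove i)) = Fin.last m := by rw [hpr, ins_self]
    unfold iota aI
    rw [e1, e2, hv, if_pos heq]
    have hlt : (σ i).castSucc < Fin.last m := Fin.castSucc_lt_last _
    simp [hlt]
  · -- i > p : shifted position
    have hsa : p.succAbove i = i.succ :=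
      Fin.succAbove_of_le_castSucc _ _ (by rw [Fin.le_def]; simp; omega)
    have hv : ((p.succAbove i : Fin (m+1)) : ℕ) = (i:ℕ) + 1 := by rw [hsa]; simp
    have hpri : p.succAbove (pr i) = (pr i).succ :=
      Fin.succAbove_of_le_castSucc _ _ (by
        rw [Fin.le_def]; simp only [Fin.coe_castSucc, pr_val]; omega)
    have hpr : pr (p.succAbove i) = p.succAbove (pr i) := by
      apply Fin.ext
      rw [pr_val, hv, hpri]
      simp [pr_val, Fin.val_succ]
      omega
    have e2 : ins σ p (pr (p.succAbove i)) = (σ (pr i)).castSucc := by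
      rw [hpr, ins_succAbove]
    rw [if_neg (by omega)]
    unfold iota
    rw [e1, e2, hv]
    simp only [Fin.coe_castSucc, Fin.castSucc_lt_castSucc_iff]
    have h0 : 0 < (i:ℕ) := by omega
    simp [h0]

lemma desEndO_ins (σ : Perm (Fin m)) (p : Fin (m+1)) :
    desEndO (m+1) (ins σ p) + (if h : (p:ℕ) < m then iota σ ⟨p, h⟩ else 0)
      = desEndO m σ + (if h : (p:ℕ) < m then aI σ ⟨p, h⟩ else 0) := by
  rw [sum_iota, sum_iota, Fin.sum_univ_succAbove _ p]
  have h0 : iota (ins σ p) p = 0 := by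
    unfold iota
    rw [if_neg]
    rintro ⟨-, hlt, -⟩
    rw [ins_self] at hlt
    exact absurd hlt (not_lt.2 (Fin.le_last _))
  rw [h0, zero_add, Finset.sum_congr rfl (fun i _ => iota_ins_succAbove σ p i)]
  by_cases hp : (p:ℕ) < m
  · rw [dif_pos hp, dif_pos hp]
    set b : Fin m := ⟨p, hp⟩ with hb
    have key : ∀ i : Fin m, ((i:ℕ) = (p:ℕ)) ↔ i = b := by
      intro i
      constructor
      · intro h; exact Fin.ext h
      · intro h; rw [h]
    rw [← Finset.add_sum_erase _ (fun i : Fin m => if (i:ℕ) = (p:ℕ) then aI σ i else iota σ i) (Finset.mem_univ b),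
        ← Finset.add_sum_erase _ (fun i : Fin m => iota σ i) (Finset.mem_univ b)]
    have h1 : (if (b:ℕ) = (p:ℕ) then aI σ b else iota σ b) = aI σ b := if_pos rfl
    have h2 : ∑ x ∈ Finset.univ.erase b, (if (x:ℕ) = (p:ℕ) then aI σ x else iota σ x)
        = ∑ x ∈ Finset.univ.erase b, iota σ x := by
      apply Finset.sum_congr rfl
      intro x hx
      rw [if_neg]
      intro hc
      exact (Finset.mem_erase.1 hx).1 ((key x).1 hc)
    rw [h1, h2]
    omega
  · rw [dif_neg hp, dif_neg hp, add_zero, add_zero]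
    apply Finset.sum_congr rfl
    intro i _
    rw [if_neg]
    have := i.isLt
    omega

lemma firstEven_iff (hm : 0 < m) (σ : Perm (Fin m)) :
    firstEven m σ ↔ Even ((σ ⟨0, hm⟩ : ℕ) + 1) := by
  constructor
  · rintro ⟨i, hi, he⟩
    have : i = ⟨0, hm⟩ := Fin.ext hi
    rwa [this] at he
  · intro h
    exact ⟨⟨0, hm⟩, rfl, h⟩

lemma firstOdd_iff (hm : 0 < m) (σ : Perm (Fin m)) :
    firstOdd m σ ↔ Odd ((σ ⟨0, hm⟩ : ℕ) + 1) := by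
  constructor
  · rintro ⟨i, hi, he⟩
    have : i = ⟨0, hm⟩ := Fin.ext hi
    rwa [this] at he
  · intro h
    exact ⟨⟨0, hm⟩, rfl, h⟩

lemma firstOdd_iff_not (hm : 0 < m) (σ : Perm (Fin m)) :
    firstOdd m σ ↔ ¬ firstEven m σ := by
  rw [firstOdd_iff hm, firstEven_iff hm, Nat.not_even_iff_odd]

lemma ins_zero_of_ne (hm : 0 < m) (σ : Perm (Fin m)) {p : Fin (m+1)} (hp : (p:ℕ) ≠ 0) :
    ins σ p ⟨0, Nat.succ_pos m⟩ = (σ ⟨0, hm⟩).castSucc := by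
  have h : (⟨0, Nat.succ_pos m⟩ : Fin (m+1)) = p.succAbove ⟨0, hm⟩ := by
    rw [Fin.succAbove_of_castSucc_lt _ _ (by rw [Fin.lt_iff_val_lt_val]; show 0 < (p:ℕ); omega)]
    apply Fin.ext
    simp
  rw [h, ins_succAbove]

lemma firstEven_ins_of_ne (hm : 0 < m) (σ : Perm (Fin m)) {p : Fin (m+1)} (hp : (p:ℕ) ≠ 0) :
    firstEven (m+1) (ins σ p) ↔ firstEven m σ := by
  rw [firstEven_iff (Nat.succ_pos m), firstEven_iff hm, ins_zero_of_ne hm σ hp]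
  simp

lemma firstOdd_ins_of_ne (hm : 0 < m) (σ : Perm (Fin m)) {p : Fin (m+1)} (hp : (p:ℕ) ≠ 0) :
    firstOdd (m+1) (ins σ p) ↔ firstOdd m σ := by
  rw [firstOdd_iff (Nat.succ_pos m), firstOdd_iff hm, ins_zero_of_ne hm σ hp]
  simp

lemma ins_zero_of_eq (σ : Perm (Fin m)) {p : Fin (m+1)} (hp : (p:ℕ) = 0) :
    ins σ p ⟨0, Nat.succ_pos m⟩ = Fin.last m := by
  have : p = ⟨0, Nat.succ_pos m⟩ := Fin.ext hp
  rw [← this, ins_self]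

lemma sum_aux (N : ℕ) : ∑ i ∈ Finset.range (2*N), (if Odd (i+1) then 1 else 0) = N := by
  induction N with
  | zero => simp
  | succ N ih =>
    have h2 : 2*(N+1) = (2*N+1)+1 := by ring
    rw [h2, Finset.sum_range_succ, Finset.sum_range_succ, ih,
      if_pos ⟨N, by ring⟩, if_neg (by rw [Nat.odd_iff]; omega)]

lemma sum_aI {n : ℕ} (σ : Perm (Fin (2*n))) : ∑ j, aI σ j = n := by
  unfold aI
  rw [Equiv.sum_comp σ (fun v : Fin (2*n) => if Odd ((v:ℕ)+1) then 1 else 0)]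
  rw [Fin.sum_univ_eq_sum_range (fun i => if Odd (i+1) then 1 else 0) (2*n)]
  exact sum_aux n

lemma desEndO_le {n : ℕ} (σ : Perm (Fin (2*n))) : desEndO (2*n) σ ≤ n := by
  rw [sum_iota]
  calc ∑ j, iota σ j ≤ ∑ j, aI σ j := Finset.sum_le_sum fun j _ => iota_le_aI σ j
    _ = n := sum_aI σ

lemma aI_le (σ : Perm (Fin m)) (j : Fin m) : aI σ j ≤ 1 := by
  unfold aI; split_ifs <;> omega

lemma sum_ind {α : Type*} [DecidableEq α] (S : Finset α) (f g : α → ℕ)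
    (hf : ∀ a ∈ S, f a ≤ 1) (hg : ∀ a ∈ S, g a ≤ f a) (K k : ℕ) :
    ∑ a ∈ S, (if K + f a = k + g a then 1 else 0) =
      if k = K then S.card + ∑ a ∈ S, g a - ∑ a ∈ S, f a
      else if k = K + 1 then ∑ a ∈ S, f a - ∑ a ∈ S, g a else 0 := by
  induction S using Finset.induction with
  | empty => simp
  | @insert a s ha ih =>
    have h1 : f a ≤ 1 := hf a (Finset.mem_insert_self a s)
    have h2 : g a ≤ f a := hg a (Finset.mem_insert_self a s)
    rw [Finset.sum_insert ha, Finset.sum_insert ha, Finset.sum_insert ha,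
      Finset.card_insert_of_notMem ha,
      ih (fun x hx => hf x (Finset.mem_insert_of_mem hx)) (fun x hx => hg x (Finset.mem_insert_of_mem hx))]
    have hGF : ∑ x ∈ s, g x ≤ ∑ x ∈ s, f x :=
      Finset.sum_le_sum fun x hx => hg x (Finset.mem_insert_of_mem hx)
    have hFc : ∑ x ∈ s, f x ≤ s.card + ∑ x ∈ s, g x := by
      calc ∑ x ∈ s, f x ≤ ∑ x ∈ s, (g x + 1) := Finset.sum_le_sum fun x hx => by
              have := hg x (Finset.mem_insert_of_mem hx)
              have := hf x (Finset.mem_insert_of_mem hx)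
              omega
        _ = s.card + ∑ x ∈ s, g x := by rw [Finset.sum_add_distrib]; simp [add_comm, mul_comm]
    split_ifs <;> omega

section Counts

variable {n : ℕ}

lemma des_ins_castSucc (σ : Perm (Fin (2*n))) (q : Fin (2*n)) :
    desEndO (2*n+1) (ins σ q.castSucc) + iota σ q = desEndO (2*n) σ + aI σ q := by
  have h := desEndO_ins σ q.castSucc
  have hlt : ((q.castSucc : Fin (2*n+1)) : ℕ) < 2*n := by simp
  rw [dif_pos hlt, dif_pos hlt] at h
  simpa using h

lemma des_ins_last (σ : Perm (Fin (2*n))) :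
    desEndO (2*n+1) (ins σ (Fin.last (2*n))) = desEndO (2*n) σ := by
  have h := desEndO_ins σ (Fin.last (2*n))
  rw [dif_neg (by simp), dif_neg (by simp)] at h
  simpa using h

lemma not_firstEven_ins_zero (σ : Perm (Fin (2*n))) {p : Fin (2*n+1)} (hp : (p:ℕ) = 0) :
    ¬ firstEven (2*n+1) (ins σ p) := by
  rw [firstEven_iff (Nat.succ_pos (2*n)), ins_zero_of_eq σ hp]
  rw [Fin.val_last, Nat.even_iff]
  omega

lemma firstOdd_ins_zero (σ : Perm (Fin (2*n))) {p : Fin (2*n+1)} (hp : (p:ℕ) = 0) :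
    firstOdd (2*n+1) (ins σ p) := by
  rw [firstOdd_iff (Nat.succ_pos (2*n)), ins_zero_of_eq σ hp, Fin.val_last, Nat.odd_iff]
  omega

lemma count0 (hn : 1 ≤ n) (σ : Perm (Fin (2*n))) (hσ : firstEven (2*n) σ) (k : ℕ) :
    (Finset.univ.filter fun p : Fin (2*n+1) =>
        firstEven (2*n+1) (ins σ p) ∧ desEndO (2*n+1) (ins σ p) = k).card
      = if k = desEndO (2*n) σ then n + k
        else if k = desEndO (2*n) σ + 1 then n - desEndO (2*n) σ else 0 := by
  classical
  have hm : 0 < 2*n := by omega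
  set K := desEndO (2*n) σ with hK
  set z : Fin (2*n) := ⟨0, hm⟩ with hz
  have hiz : iota σ z = 0 := iota_zero σ z rfl
  have haz : aI σ z = 0 := by
    have he := (firstEven_iff hm σ).1 hσ
    rw [← hz] at he
    unfold aI
    rw [if_neg]
    rw [Nat.odd_iff]
    rw [Nat.even_iff] at he
    omega
  rw [Finset.card_filter, Fin.sum_univ_castSucc]
  -- the last slot
  have hlast : (if firstEven (2*n+1) (ins σ (Fin.last (2*n)))
        ∧ desEndO (2*n+1) (ins σ (Fin.last (2*n))) = k then 1 else 0)
      = if k = K then 1 else 0 := by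
    have hfe : firstEven (2*n+1) (ins σ (Fin.last (2*n))) :=
      (firstEven_ins_of_ne hm σ (by simp; omega)).2 hσ
    rw [des_ins_last σ]
    simp [hfe, eq_comm]
    rfl
  rw [hlast]
  -- the castSucc slots
  have hzero : (if firstEven (2*n+1) (ins σ (Fin.castSucc z))
        ∧ desEndO (2*n+1) (ins σ (Fin.castSucc z)) = k then 1 else 0) = 0 := by
    rw [if_neg]
    rintro ⟨hfe, -⟩
    exact not_firstEven_ins_zero σ (by simp [hz]) hfe
  have hsum : ∀ q : Fin (2*n), q ∈ Finset.univ.erase z →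
      (if firstEven (2*n+1) (ins σ q.castSucc) ∧ desEndO (2*n+1) (ins σ q.castSucc) = k then 1 else 0)
        = (if K + aI σ q = k + iota σ q then 1 else 0) := by
    intro q hq
    have hq0 : (q:ℕ) ≠ 0 := by
      intro h
      exact (Finset.mem_erase.1 hq).1 (Fin.ext h)
    have h1 : firstEven (2*n+1) (ins σ q.castSucc) ↔ firstEven (2*n) σ :=
      firstEven_ins_of_ne hm σ (by simpa using hq0)
    have h2 := des_ins_castSucc σ q
    apply if_congr _ rfl rfl
    rw [h1]
    constructor
    · rintro ⟨-, h⟩; omega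
    · intro h; exact ⟨hσ, by omega⟩
  rw [← Finset.add_sum_erase _ _ (Finset.mem_univ z), hzero, zero_add,
    Finset.sum_congr rfl hsum,
    sum_ind _ (aI σ) (iota σ) (fun a _ => aI_le σ a) (fun a _ => iota_le_aI σ a) K k]
  have hA : aI σ z + ∑ x ∈ Finset.univ.erase z, aI σ x = n := by
    rw [Finset.add_sum_erase _ (aI σ) (Finset.mem_univ z)]
    exact sum_aI σ
  have hG : iota σ z + ∑ x ∈ Finset.univ.erase z, iota σ x = K := by
    rw [Finset.add_sum_erase _ (iota σ) (Finset.mem_univ z)]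
    exact (sum_iota σ).symm
  have hcard : (Finset.univ.erase z).card = 2*n - 1 := by
    rw [Finset.card_erase_of_mem (Finset.mem_univ z)]
    simp
  have hKn : K ≤ n := desEndO_le σ
  have hF : ∑ x ∈ Finset.univ.erase z, aI σ x = n := by
    rw [haz, zero_add] at hA; exact hA
  have hG' : ∑ x ∈ Finset.univ.erase z, iota σ x = K := by
    rw [hiz, zero_add] at hG; exact hG
  rw [hcard, hF, hG']
  split_ifs <;> omega

lemma count0_odd (hn : 1 ≤ n) (σ : Perm (Fin (2*n))) (hσ : firstOdd (2*n) σ) (k : ℕ) :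
    (Finset.univ.filter fun p : Fin (2*n+1) =>
        firstEven (2*n+1) (ins σ p) ∧ desEndO (2*n+1) (ins σ p) = k).card = 0 := by
  have hm : 0 < 2*n := by omega
  have hnσ : ¬ firstEven (2*n) σ := (firstOdd_iff_not hm σ).1 hσ
  rw [Finset.card_eq_zero, Finset.eq_empty_iff_forall_notMem]
  intro p hp
  obtain ⟨hfe, -⟩ := (Finset.mem_filter.1 hp).2
  by_cases h0 : (p:ℕ) = 0
  · exact not_firstEven_ins_zero σ h0 hfe
  · exact hnσ ((firstEven_ins_of_ne hm σ h0).1 hfe)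

lemma count1_even (hn : 1 ≤ n) (σ : Perm (Fin (2*n))) (hσ : firstEven (2*n) σ) (k : ℕ) :
    (Finset.univ.filter fun p : Fin (2*n+1) =>
        firstOdd (2*n+1) (ins σ p) ∧ desEndO (2*n+1) (ins σ p) = k).card
      = if k = desEndO (2*n) σ then 1 else 0 := by
  classical
  have hm : 0 < 2*n := by omega
  have hnσ : ¬ firstOdd (2*n) σ := fun h => ((firstOdd_iff_not hm σ).1 h) hσ
  set K := desEndO (2*n) σ with hK
  set z : Fin (2*n) := ⟨0, hm⟩ with hz
  have hiz : iota σ z = 0 := iota_zero σ z rfl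
  have haz : aI σ z = 0 := by
    have he := (firstEven_iff hm σ).1 hσ
    rw [← hz] at he
    unfold aI
    rw [if_neg]
    rw [Nat.odd_iff]
    rw [Nat.even_iff] at he
    omega
  rw [Finset.card_filter, Fin.sum_univ_castSucc]
  have hlast : (if firstOdd (2*n+1) (ins σ (Fin.last (2*n)))
        ∧ desEndO (2*n+1) (ins σ (Fin.last (2*n))) = k then 1 else 0) = 0 := by
    rw [if_neg]
    rintro ⟨hfo, -⟩
    exact hnσ ((firstOdd_ins_of_ne hm σ (by simp; omega)).1 hfo)
  rw [hlast, add_zero]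
  have hzero : (if firstOdd (2*n+1) (ins σ (Fin.castSucc z))
        ∧ desEndO (2*n+1) (ins σ (Fin.castSucc z)) = k then 1 else 0)
      = if k = K then 1 else 0 := by
    have hfo : firstOdd (2*n+1) (ins σ (Fin.castSucc z)) :=
      firstOdd_ins_zero σ (by simp [hz])
    have h2 := des_ins_castSucc σ z
    rw [hiz, haz, add_zero, add_zero] at h2
    rw [h2]
    simp [hfo, eq_comm]
    rfl
  have hsum : ∀ q : Fin (2*n), q ∈ Finset.univ.erase z →
      (if firstOdd (2*n+1) (ins σ q.castSucc) ∧ desEndO (2*n+1) (ins σ q.castSucc) = k then 1 else 0)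
        = 0 := by
    intro q hq
    have hq0 : (q:ℕ) ≠ 0 := by
      intro h
      exact (Finset.mem_erase.1 hq).1 (Fin.ext h)
    rw [if_neg]
    rintro ⟨hfo, -⟩
    exact hnσ ((firstOdd_ins_of_ne hm σ (by simpa using hq0)).1 hfo)
  rw [← Finset.add_sum_erase _ _ (Finset.mem_univ z), hzero,
    Finset.sum_congr rfl hsum]
  simp

lemma count1_odd (hn : 1 ≤ n) (σ : Perm (Fin (2*n))) (hσ : firstOdd (2*n) σ) (k : ℕ) :
    (Finset.univ.filter fun p : Fin (2*n+1) =>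
        firstOdd (2*n+1) (ins σ p) ∧ desEndO (2*n+1) (ins σ p) = k).card
      = if k = desEndO (2*n) σ then n + desEndO (2*n) σ + 1
        else if k = desEndO (2*n) σ + 1 then n - desEndO (2*n) σ else 0 := by
  classical
  have hm : 0 < 2*n := by omega
  set K := desEndO (2*n) σ with hK
  set z : Fin (2*n) := ⟨0, hm⟩ with hz
  have hiz : iota σ z = 0 := iota_zero σ z rfl
  have haz : aI σ z = 1 := by
    have he := (firstOdd_iff hm σ).1 hσ
    rw [← hz] at he
    unfold aI
    rw [if_pos he]
  rw [Finset.card_filter, Fin.sum_univ_castSucc]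
  have hlast : (if firstOdd (2*n+1) (ins σ (Fin.last (2*n)))
        ∧ desEndO (2*n+1) (ins σ (Fin.last (2*n))) = k then 1 else 0)
      = if k = K then 1 else 0 := by
    have hfo : firstOdd (2*n+1) (ins σ (Fin.last (2*n))) :=
      (firstOdd_ins_of_ne hm σ (by simp; omega)).2 hσ
    rw [des_ins_last σ]
    simp [hfo, eq_comm]
    rfl
  rw [hlast]
  have hzero : (if firstOdd (2*n+1) (ins σ (Fin.castSucc z))
        ∧ desEndO (2*n+1) (ins σ (Fin.castSucc z)) = k then 1 else 0)
      = if k = K + 1 then 1 else 0 := by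
    have hfo : firstOdd (2*n+1) (ins σ (Fin.castSucc z)) :=
      firstOdd_ins_zero σ (by simp [hz])
    have h2 := des_ins_castSucc σ z
    rw [hiz, haz, add_zero] at h2
    rw [h2]
    simp [hfo, eq_comm]
    rfl
  have hsum : ∀ q : Fin (2*n), q ∈ Finset.univ.erase z →
      (if firstOdd (2*n+1) (ins σ q.castSucc) ∧ desEndO (2*n+1) (ins σ q.castSucc) = k then 1 else 0)
        = (if K + aI σ q = k + iota σ q then 1 else 0) := by
    intro q hq
    have hq0 : (q:ℕ) ≠ 0 := by
      intro h
      exact (Finset.mem_erase.1 hq).1 (Fin.ext h)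
    have h1 : firstOdd (2*n+1) (ins σ q.castSucc) ↔ firstOdd (2*n) σ :=
      firstOdd_ins_of_ne hm σ (by simpa using hq0)
    have h2 := des_ins_castSucc σ q
    apply if_congr _ rfl rfl
    rw [h1]
    constructor
    · rintro ⟨-, h⟩; omega
    · intro h; exact ⟨hσ, by omega⟩
  rw [← Finset.add_sum_erase _ _ (Finset.mem_univ z), hzero,
    Finset.sum_congr rfl hsum,
    sum_ind _ (aI σ) (iota σ) (fun a _ => aI_le σ a) (fun a _ => iota_le_aI σ a) K k]
  have hA : aI σ z + ∑ x ∈ Finset.univ.erase z, aI σ x = n := by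
    rw [Finset.add_sum_erase _ (aI σ) (Finset.mem_univ z)]
    exact sum_aI σ
  have hG : iota σ z + ∑ x ∈ Finset.univ.erase z, iota σ x = K := by
    rw [Finset.add_sum_erase _ (iota σ) (Finset.mem_univ z)]
    exact (sum_iota σ).symm
  have hcard : (Finset.univ.erase z).card = 2*n - 1 := by
    rw [Finset.card_erase_of_mem (Finset.mem_univ z)]
    simp
  have hF : ∑ x ∈ Finset.univ.erase z, aI σ x = n - 1 := by omega
  have hG' : ∑ x ∈ Finset.univ.erase z, iota σ x = K := by
    rw [hiz, zero_add] at hG; exact hG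
  have hKn : K ≤ n - 1 := by
    have hle : ∑ x ∈ Finset.univ.erase z, iota σ x ≤ ∑ x ∈ Finset.univ.erase z, aI σ x :=
      Finset.sum_le_sum fun x _ => iota_le_aI σ x
    omega
  rw [hcard, hF, hG']
  split_ifs <;> omega


lemma Q0_zero_of_gt {j : ℕ} (hj : n < j) : Q0 j (2*n) = 0 := by
  rw [Q0, Finset.card_eq_zero, Finset.eq_empty_iff_forall_notMem]
  intro σ hσ
  obtain ⟨-, hd⟩ := (Finset.mem_filter.1 hσ).2
  have := desEndO_le σ
  omega

lemma Q1_zero_of_gt {j : ℕ} (hj : n < j) : Q1 j (2*n) = 0 := by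
  rw [Q1, Finset.card_eq_zero, Finset.eq_empty_iff_forall_notMem]
  intro σ hσ
  obtain ⟨-, hd⟩ := (Finset.mem_filter.1 hσ).2
  have := desEndO_le σ
  omega

lemma hQ0nat (hn : 1 ≤ n) (k : ℕ) :
    Q0 k (2*n+1) = (n+k) * Q0 k (2*n)
      + (n-(k-1)) * (if k = 0 then 0 else Q0 (k-1) (2*n)) := by
  classical
  have hm : 0 < 2*n := by omega
  rw [Q0, card_filter_ins (fun τ => firstEven (2*n+1) τ ∧ desEndO (2*n+1) τ = k),
    card_filter_prod (fun σ (p : Fin (2*n+1)) =>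
      firstEven (2*n+1) (ins σ p) ∧ desEndO (2*n+1) (ins σ p) = k)]
  have hpt : ∀ σ : Perm (Fin (2*n)),
      (Finset.univ.filter fun p : Fin (2*n+1) =>
        firstEven (2*n+1) (ins σ p) ∧ desEndO (2*n+1) (ins σ p) = k).card
      = (if firstEven (2*n) σ ∧ desEndO (2*n) σ = k then n + k else 0)
        + (if firstEven (2*n) σ ∧ desEndO (2*n) σ + 1 = k then n - (k-1) else 0) := by
    intro σ
    by_cases hfe : firstEven (2*n) σ
    · rw [count0 hn σ hfe k]
      simp only [hfe, true_and]
      split_ifs <;> omega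
    · have hfo : firstOdd (2*n) σ := (firstOdd_iff_not hm σ).2 hfe
      rw [count0_odd hn σ hfo k]
      simp [hfe]
  rw [Finset.sum_congr rfl (fun σ _ => hpt σ), Finset.sum_add_distrib]
  congr 1
  · rw [← Finset.sum_filter, Finset.sum_const, smul_eq_mul, Q0, mul_comm]
  · by_cases hk : k = 0
    · subst hk
      simp
    · rw [if_neg hk, ← Finset.sum_filter, Finset.sum_const, smul_eq_mul, Q0, mul_comm]
      congr 2
      apply Finset.filter_congr
      intro σ _
      constructor
      · rintro ⟨h1, h2⟩; exact ⟨h1, by omega⟩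
      · rintro ⟨h1, h2⟩; exact ⟨h1, by omega⟩

lemma hQ1nat (hn : 1 ≤ n) (k : ℕ) :
    Q1 k (2*n+1) = Q0 k (2*n) + (n+k+1) * Q1 k (2*n)
      + (n-(k-1)) * (if k = 0 then 0 else Q1 (k-1) (2*n)) := by
  classical
  have hm : 0 < 2*n := by omega
  rw [Q1, card_filter_ins (fun τ => firstOdd (2*n+1) τ ∧ desEndO (2*n+1) τ = k),
    card_filter_prod (fun σ (p : Fin (2*n+1)) =>
      firstOdd (2*n+1) (ins σ p) ∧ desEndO (2*n+1) (ins σ p) = k)]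
  have hpt : ∀ σ : Perm (Fin (2*n)),
      (Finset.univ.filter fun p : Fin (2*n+1) =>
        firstOdd (2*n+1) (ins σ p) ∧ desEndO (2*n+1) (ins σ p) = k).card
      = (if firstEven (2*n) σ ∧ desEndO (2*n) σ = k then 1 else 0)
        + ((if firstOdd (2*n) σ ∧ desEndO (2*n) σ = k then n + k + 1 else 0)
        + (if firstOdd (2*n) σ ∧ desEndO (2*n) σ + 1 = k then n - (k-1) else 0)) := by
    intro σ
    by_cases hfe : firstEven (2*n) σ
    · have hfo : ¬ firstOdd (2*n) σ := fun h => ((firstOdd_iff_not hm σ).1 h) hfe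
      rw [count1_even hn σ hfe k]
      simp only [hfe, hfo, true_and, false_and, if_false, add_zero, zero_add]
      split_ifs <;> omega
    · have hfo : firstOdd (2*n) σ := (firstOdd_iff_not hm σ).2 hfe
      rw [count1_odd hn σ hfo k]
      simp only [hfe, hfo, true_and, false_and, if_false, add_zero, zero_add]
      split_ifs <;> omega
  rw [Finset.sum_congr rfl (fun σ _ => hpt σ), Finset.sum_add_distrib, Finset.sum_add_distrib,
    ← add_assoc]
  congr 1
  congr 1
  · rw [← Finset.sum_filter, Finset.sum_const, smul_eq_mul, mul_one, Q0]
  · rw [← Finset.sum_filter, Finset.sum_const, smul_eq_mul, Q1, mul_comm]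
  · by_cases hk : k = 0
    · subst hk
      simp
    · rw [if_neg hk, ← Finset.sum_filter, Finset.sum_const, smul_eq_mul, Q1, mul_comm]
      congr 2
      apply Finset.filter_congr
      intro σ _
      constructor
      · rintro ⟨h1, h2⟩; exact ⟨h1, by omega⟩
      · rintro ⟨h1, h2⟩; exact ⟨h1, by omega⟩

end Counts

end Dev

theorem stmt_12 (n k : ℕ) (hn : 1 ≤ n) :
    (Q0 k (2*n+1) : ℤ) = ((n : ℤ) + k) * Q0 k (2*n)
        + ((n : ℤ) - k + 1) * (if k = 0 then 0 else (Q0 (k-1) (2*n) : ℤ)) ∧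
    (Q1 k (2*n+1) : ℤ) = (Q0 k (2*n) : ℤ) + ((n : ℤ) + k + 1) * Q1 k (2*n)
        + ((n : ℤ) - k + 1) * (if k = 0 then 0 else (Q1 (k-1) (2*n) : ℤ)) := by
  constructor
  · rw [hQ0nat hn k]
    by_cases hk : k = 0
    · subst hk
      rw [if_pos rfl, if_pos rfl]
      push_cast
      ring
    · rw [if_neg hk, if_neg hk]
      by_cases hkn : k - 1 ≤ n
      · have e1 : ((n - (k-1) : ℕ) : ℤ) = (n:ℤ) - k + 1 := by omega
        rw [Nat.cast_add, Nat.cast_mul, Nat.cast_mul, e1]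
        push_cast
        ring
      · have hz : Q0 (k-1) (2*n) = 0 := Q0_zero_of_gt (by omega)
        rw [hz, mul_zero, add_zero]
        push_cast
        ring
  · rw [hQ1nat hn k]
    by_cases hk : k = 0
    · subst hk
      rw [if_pos rfl, if_pos rfl]
      push_cast
      ring
    · rw [if_neg hk, if_neg hk]
      by_cases hkn : k - 1 ≤ n
      · have e1 : ((n - (k-1) : ℕ) : ℤ) = (n:ℤ) - k + 1 := by omega
        rw [Nat.cast_add, Nat.cast_add, Nat.cast_mul, Nat.cast_mul, e1]
        push_cast
        ring
      · have hz : Q1 (k-1) (2*n) = 0 := Q1_zero_of_gt (by omega)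
        rw [hz, mul_zero, add_zero]
        push_cast
        ring


end DescentParity
end

section
/- For all integers n ≥ 1 and all k ≥ 0, P_{0,k,n} = Q_{1,k,n} and P_{1,k,n} = Q_{0,k+1,n}. In other words, the number of n-permutations beginning with an odd number and having exactly k descents ending with an even number equals the number of n-permutations beginning with an odd number and having exactly k descents ending with an odd number; and the number of n-permutations beginning with an even number and having exactly k descents ending with an even number equals the number of n-permutations beginning with an even number and having exactly k+1 descents ending with an odd number. -/
set_option maxHeartbeats 1000000

namespace DescentParity

open List

def dsc (p : ℕ → Bool) : List ℕ → ℕ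
  | a :: b :: t => (if b < a ∧ p b = true then 1 else 0) + dsc p (b :: t)
  | _ => 0

def asc (p : ℕ → Bool) : List ℕ → ℕ
  | a :: b :: t => (if a ≤ b ∧ p b = true then 1 else 0) + asc p (b :: t)
  | _ => 0

def hdB (p : ℕ → Bool) : List ℕ → Bool
  | a :: _ => p a
  | [] => false

@[simp] lemma dsc_nil (p) : dsc p [] = 0 := rfl
@[simp] lemma dsc_single (p a) : dsc p [a] = 0 := rfl
@[simp] lemma dsc_cons2 (p a b t) :
    dsc p (a :: b :: t) = (if b < a ∧ p b = true then 1 else 0) + dsc p (b :: t) := rfl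
@[simp] lemma asc_nil (p) : asc p [] = 0 := rfl
@[simp] lemma asc_single (p a) : asc p [a] = 0 := rfl
@[simp] lemma asc_cons2 (p a b t) :
    asc p (a :: b :: t) = (if a ≤ b ∧ p b = true then 1 else 0) + asc p (b :: t) := rfl
@[simp] lemma hdB_nil (p) : hdB p [] = false := rfl
@[simp] lemma hdB_cons (p a t) : hdB p (a :: t) = p a := rfl

/-- every p-element is head, descent bottom, or weak-ascent bottom -/
lemma count_split (p : ℕ → Bool) : ∀ l : List ℕ,
    (if hdB p l then 1 else 0) + dsc p l + asc p l = l.countP p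
  | [] => by simp
  | [a] => by simp [List.countP_cons]; rfl
  | a :: b :: t => by
    have ih := count_split p (b :: t)
    have hcount : (a :: b :: t).countP p = (b :: t).countP p + (if p a = true then 1 else 0) := by
      simp [List.countP_cons]
    have key : (if b < a ∧ p b = true then 1 else 0) + (if a ≤ b ∧ p b = true then 1 else 0)
        = (if p b = true then 1 else 0) := by
      by_cases hp : p b = true <;> by_cases hl : b < a <;>
        simp [hp, hl] <;> omega
    rw [hdB_cons] at ih ⊢
    simp only [dsc_cons2, asc_cons2, hdB_cons] at *
    omega

lemma aux_front (x : ℕ) (l : List ℕ) :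
    List.permutations'Aux x l = (x :: l) :: (List.permutations'Aux x l).tail := by
  cases l <;> rfl

lemma dsc_cons_big (p : ℕ → Bool) (x : ℕ) (l : List ℕ) (h : ∀ a ∈ l, a < x) :
    dsc p (x :: l) = dsc p l + (if hdB p l then 1 else 0) := by
  cases l with
  | nil => simp
  | cons y ys =>
    have hy : y < x := h y (by simp)
    simp only [dsc_cons2, hdB_cons]
    by_cases hp : p y = true <;> simp [hp, hy] <;> omega

lemma heads_tail (x : ℕ) : ∀ (l : List ℕ), ∀ t ∈ (List.permutations'Aux x l).tail, t.head? = l.head? := by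
  intro l
  cases l with
  | nil => simp [List.permutations'Aux]
  | cons y ys =>
    intro t ht
    have he : (List.permutations'Aux x (y :: ys)).tail = (List.permutations'Aux x ys).map (y :: ·) := rfl
    rw [he] at ht
    obtain ⟨s, _, rfl⟩ := List.mem_map.mp ht
    rfl

lemma hdB_head? (q : ℕ → Bool) (l t : List ℕ) (h : t.head? = l.head?) : hdB q t = hdB q l := by
  cases l <;> cases t <;> simp_all

lemma countP_shift (L : List (List ℕ)) (p : ℕ → Bool) (c k : ℕ) :
    L.countP (fun t => decide (dsc p t + c = k))
    = if c ≤ k then L.countP (fun t => decide (dsc p t = k - c)) else 0 := by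
  split_ifs with hc
  · apply List.countP_congr; intro t _; simp; omega
  · apply List.countP_eq_zero.mpr; intro t _; simp; omega

/-- the key tail-count lemma -/
lemma tail_count (p : ℕ → Bool) (x : ℕ) : ∀ (l : List ℕ), (∀ a ∈ l, a < x) → ∀ k,
    ((List.permutations'Aux x l).tail).countP (fun t => decide (dsc p t = k))
    = if k = dsc p l + 1 then asc p l else if k = dsc p l then l.length - asc p l else 0
  | [], _, k => by
    have : (List.permutations'Aux x []).tail = ([] : List (List ℕ)) := rfl
    rw [this]
    simp only [List.countP_nil, dsc_nil, asc_nil, List.length_nil]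
    split_ifs <;> simp
  | [y], h, k => by
    have hyx : y < x := h y (by simp)
    have e : (List.permutations'Aux x [y]).tail = [[y, x]] := rfl
    rw [e]
    have hd : dsc p [y, x] = 0 := by
      simp only [dsc_cons2, dsc_single]
      have : ¬ (x < y) := by omega
      simp [this]
    rw [dsc_single, asc_single]
    simp only [List.countP_cons, List.countP_nil, hd, dsc_single, asc_single, List.length_singleton]
    simp only [decide_eq_true_eq]
    split_ifs <;> omega
  | y :: z :: ys, h, k => by
    have hyx : y < x := h y (by simp)
    have hzx : z < x := h z (by simp [List.mem_cons])
    have hys : ∀ a ∈ z :: ys, a < x := fun a ha => h a (List.mem_cons_of_mem _ ha)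
    have e1 : (List.permutations'Aux x (y :: z :: ys)).tail
        = ((x :: z :: ys) :: (List.permutations'Aux x (z :: ys)).tail).map (y :: ·) := by
      have : (List.permutations'Aux x (y :: z :: ys)).tail
          = (List.permutations'Aux x (z :: ys)).map (y :: ·) := rfl
      rw [this]
      conv_lhs => rw [aux_front x (z :: ys)]
    rw [e1, List.map_cons, List.countP_cons, List.countP_map]
    have e3 : ((List.permutations'Aux x (z :: ys)).tail).countP
        ((fun t => decide (dsc p t = k)) ∘ (y :: ·))
        = ((List.permutations'Aux x (z :: ys)).tail).countP
          (fun t => decide (dsc p t + (if z < y ∧ p z = true then 1 else 0) = k)) := by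
      apply List.countP_congr
      intro t ht
      have hh := heads_tail x (z :: ys) t ht
      cases t with
      | nil => simp at hh
      | cons w t' =>
        simp only [List.head?_cons] at hh
        have hw : w = z := by injection hh
        subst hw
        simp only [Function.comp, decide_eq_true_eq]
        rw [dsc_cons2]
        constructor <;> intro <;> omega
    rw [e3, countP_shift]
    have ih := tail_count p x (z :: ys) hys (k - (if z < y ∧ p z = true then 1 else 0))
    rw [ih]
    -- front element
    have e2 : dsc p (y :: x :: z :: ys) = dsc p (z :: ys) + (if p z = true then 1 else 0) := by
      have h1 : ¬ (x < y) := by omega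
      simp only [dsc_cons2, h1, false_and, if_false, zero_add]
      by_cases hp : p z = true <;> simp [hp, hzx] <;> omega
    -- relations
    have hdyz : dsc p (y :: z :: ys) = dsc p (z :: ys) + (if z < y ∧ p z = true then 1 else 0) := by
      simp only [dsc_cons2]; omega
    have hayz : asc p (y :: z :: ys) = asc p (z :: ys) + (if y ≤ z ∧ p z = true then 1 else 0) := by
      simp only [asc_cons2]; omega
    have hsplit := count_split p (z :: ys)
    have hcl : (z :: ys).countP p ≤ (z :: ys).length := List.countP_le_length
    have hlen : (z :: ys).length = ys.length + 1 := rfl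
    rw [e2, hdyz, hayz]
    rw [hdB_cons] at hsplit
    simp only [List.length_cons, decide_eq_true_eq]
    by_cases hpz : p z = true
    · by_cases hzy : z < y
      · have g1 : (if z < y ∧ p z = true then 1 else 0) = 1 := if_pos ⟨hzy, hpz⟩
        have g2 : (if y ≤ z ∧ p z = true then (1:ℕ) else 0) = 0 := by
          rw [if_neg]; rintro ⟨h, -⟩; omega
        have g3 : (if p z = true then (1:ℕ) else 0) = 1 := if_pos hpz
        rw [g3] at hsplit
        rw [g1, g2, g3]
        split_ifs <;> omega
      · have g1 : (if z < y ∧ p z = true then 1 else 0) = 0 := by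
          rw [if_neg]; rintro ⟨h, -⟩; exact hzy h
        have g2 : (if y ≤ z ∧ p z = true then (1:ℕ) else 0) = 1 := if_pos ⟨by omega, hpz⟩
        have g3 : (if p z = true then (1:ℕ) else 0) = 1 := if_pos hpz
        rw [g3] at hsplit
        rw [g1, g2, g3]
        split_ifs <;> omega
    · have g1 : (if z < y ∧ p z = true then 1 else 0) = 0 := by
        rw [if_neg]; rintro ⟨-, h⟩; exact hpz h
      have g2 : (if y ≤ z ∧ p z = true then (1:ℕ) else 0) = 0 := by
        rw [if_neg]; rintro ⟨-, h⟩; exact hpz h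
      have g3 : (if p z = true then (1:ℕ) else 0) = 0 := if_neg hpz
      rw [g3] at hsplit
      rw [g1, g2, g3]
      split_ifs <;> omega

/-- assembled key lemma for insertions of a maximal element -/
lemma key_count (q p : ℕ → Bool) (x k : ℕ) (l : List ℕ) (h : ∀ a ∈ l, a < x) :
    (List.permutations'Aux x l).countP (fun t => hdB q t && decide (dsc p t = k))
    = (if q x = true ∧ dsc p l + (if hdB p l then 1 else 0) = k then 1 else 0)
    + (if hdB q l = true then
        (if k = dsc p l + 1 then asc p l else if k = dsc p l then l.length - asc p l else 0)
      else 0) := by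
  conv_lhs => rw [aux_front x l]
  rw [List.countP_cons]
  have hbr : (if (hdB q (x :: l) && decide (dsc p (x :: l) = k)) = true then (1:ℕ) else 0)
      = (if q x = true ∧ dsc p l + (if hdB p l then 1 else 0) = k then 1 else 0) := by
    rw [dsc_cons_big p x l h]
    simp only [hdB_cons, Bool.and_eq_true, decide_eq_true_eq]
  rw [hbr]
  by_cases hq : hdB q l = true
  · have h2 : (List.permutations'Aux x l).tail.countP (fun t => hdB q t && decide (dsc p t = k))
        = (List.permutations'Aux x l).tail.countP (fun t => decide (dsc p t = k)) := by
      apply List.countP_congr; intro t ht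
      rw [hdB_head? q l t (heads_tail x l t ht), hq]
      simp
    rw [h2, tail_count p x l h k, if_pos hq, add_comm]
  · have h2 : (List.permutations'Aux x l).tail.countP (fun t => hdB q t && decide (dsc p t = k)) = 0 := by
      apply List.countP_eq_zero.mpr
      intro t ht
      rw [hdB_head? q l t (heads_tail x l t ht)]
      simp only [Bool.and_eq_true, decide_eq_true_eq, not_and]
      intro hc; exact absurd hc hq
    rw [h2, if_neg hq]
    omega

def seqL : ℕ → List ℕ
  | 0 => []
  | m + 1 => (m + 1) :: seqL m

def perms (m : ℕ) : List (List ℕ) := (seqL m).permutations'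

def cnt (q p : ℕ → Bool) (k m : ℕ) : ℕ :=
  (perms m).countP (fun l => hdB q l && decide (dsc p l = k))

def prevC (f : ℕ → ℕ) : ℕ → ℕ
  | 0 => 0
  | k + 1 => f k

@[simp] lemma seqL_length (m : ℕ) : (seqL m).length = m := by
  induction m with
  | zero => rfl
  | succ m ih => simp [seqL, ih]

lemma seqL_lt (m : ℕ) : ∀ a ∈ seqL m, a < m + 1 := by
  induction m with
  | zero => simp [seqL]
  | succ m ih =>
    intro a ha
    rcases List.mem_cons.mp ha with rfl | ha
    · omega
    · have := ih a ha; omega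

lemma mem_perms {m : ℕ} {l : List ℕ} (h : l ∈ perms m) : l.Perm (seqL m) :=
  List.mem_permutations'.mp h

lemma perms_succ (m : ℕ) : perms (m + 1) = (perms m).flatMap (List.permutations'Aux (m + 1)) := rfl

lemma countP_flatMap (Q : List ℕ → Bool) (f : List ℕ → List (List ℕ)) :
    ∀ L : List (List ℕ), (L.flatMap f).countP Q = (L.map (fun a => (f a).countP Q)).sum
  | [] => rfl
  | a :: L => by
    simp only [List.flatMap_cons, List.countP_append, List.map_cons, List.sum_cons]
    rw [countP_flatMap Q f L]

lemma sum_map_eq3 (c1 c2 c3 : ℕ) (q1 q2 q3 : List ℕ → Bool) (g : List ℕ → ℕ) :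
    ∀ L : List (List ℕ),
    (∀ a ∈ L, g a = c1 * (if q1 a = true then 1 else 0) + c2 * (if q2 a = true then 1 else 0)
      + c3 * (if q3 a = true then 1 else 0)) →
    (L.map g).sum = c1 * L.countP q1 + c2 * L.countP q2 + c3 * L.countP q3
  | [], _ => by simp
  | a :: L, h => by
    have ih := sum_map_eq3 c1 c2 c3 q1 q2 q3 g L (fun b hb => h b (List.mem_cons_of_mem a hb))
    simp only [List.map_cons, List.sum_cons, List.countP_cons, ih, h a List.mem_cons_self]
    ring

lemma cnt_shift (q p : ℕ → Bool) (k m : ℕ) :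
    (perms m).countP (fun l => hdB q l && decide (dsc p l + 1 = k))
    = prevC (fun j => cnt q p j m) k := by
  cases k with
  | zero =>
    apply List.countP_eq_zero.mpr
    intro l _
    simp
  | succ k =>
    apply List.countP_congr
    intro l _
    simp

lemma cnt_le_vanish (q p : ℕ → Bool) (k m : ℕ) (hk : (seqL m).countP p < k) :
    cnt q p k m = 0 := by
  apply List.countP_eq_zero.mpr
  intro l hl
  simp only [Bool.and_eq_true, decide_eq_true_eq, not_and]
  intro _ hc
  have h1 := count_split p l
  have h2 := (mem_perms hl).countP_eq p
  omega

lemma recDiff (q p : ℕ → Bool) (hqp : ∀ n, q n = !p n) (m k : ℕ) (hm : 1 ≤ m) :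
    cnt q p k (m + 1)
      = (if q (m+1) = true then 1 else 0) * prevC (fun j => cnt p p j m) k
        + ((if q (m+1) = true then 1 else 0) + (m - (seqL m).countP p) + k) * cnt q p k m
        + ((seqL m).countP p + 1 - k) * prevC (fun j => cnt q p j m) k := by
  have hcm : (seqL m).countP p ≤ m := by
    have := List.countP_le_length (p := p) (l := seqL m); simpa using this
  have hpt : ∀ l ∈ perms m,
      (List.permutations'Aux (m+1) l).countP (fun t => hdB q t && decide (dsc p t = k))
      = (if q (m+1) = true then 1 else 0) * (if (hdB p l && decide (dsc p l + 1 = k)) = true then 1 else 0)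
        + ((if q (m+1) = true then 1 else 0) + (m - (seqL m).countP p) + k) * (if (hdB q l && decide (dsc p l = k)) = true then 1 else 0)
        + ((seqL m).countP p + 1 - k) * (if (hdB q l && decide (dsc p l + 1 = k)) = true then 1 else 0) := by
    intro l hl
    have hperm := mem_perms hl
    have hlen : l.length = m := by rw [hperm.length_eq, seqL_length]
    have hlt : ∀ a ∈ l, a < m + 1 := fun a ha => seqL_lt m a (hperm.mem_iff.mp ha)
    have hcP : l.countP p = (seqL m).countP p := hperm.countP_eq p
    have hsplit := count_split p l
    have hne : l ≠ [] := by intro hc; rw [hc] at hlen; simp at hlen; omega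
    obtain ⟨a0, t0, rfl⟩ := List.exists_cons_of_ne_nil hne
    have hhd : hdB q (a0 :: t0) = !hdB p (a0 :: t0) := by simp [hqp a0]
    rw [key_count q p (m+1) k _ hlt]
    cases hb : hdB p (a0 :: t0) with
    | true =>
      have e0 : hdB q (a0 :: t0) = false := by rw [hhd, hb]; rfl
      by_cases hqx : q (m+1) = true <;>
        simp only [hqx, hb, e0, Bool.false_and, Bool.true_and, Bool.and_eq_true, decide_eq_true_eq, if_true, if_false, Bool.false_eq_true, true_and, false_and, and_true, and_false, mul_zero, mul_one, one_mul, zero_mul, add_zero, zero_add] <;>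
        split_ifs <;> omega
    | false =>
      have e0 : hdB q (a0 :: t0) = true := by rw [hhd, hb]; rfl
      have hs2 : dsc p (a0 :: t0) + asc p (a0 :: t0) = (seqL m).countP p := by
        rw [← hcP, ← hsplit, hb]; simp
      rw [hlen]
      by_cases hqx : q (m+1) = true <;>
        simp only [hqx, hb, e0, Bool.false_and, Bool.true_and, Bool.and_eq_true, decide_eq_true_eq, if_true, if_false, Bool.false_eq_true, true_and, false_and, and_true, and_false, mul_zero, mul_one, one_mul, zero_mul, add_zero, zero_add] <;>
        split_ifs <;> omega
  have := sum_map_eq3 _ _ _ _ _ _ _ (perms m) hpt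
  rw [cnt, perms_succ, countP_flatMap, this, cnt_shift, cnt_shift]
  rfl

lemma recSame (q p : ℕ → Bool) (hqp : ∀ n, q n = !p n) (m k : ℕ) (hm : 1 ≤ m) :
    cnt p p k (m + 1)
      = ((if p (m+1) = true then 1 else 0) + ((seqL m).countP p - k)) * prevC (fun j => cnt p p j m) k
        + (if p (m+1) = true then 1 else 0) * cnt q p k m
        + (m + 1 + k - (seqL m).countP p) * cnt p p k m := by
  have hcm : (seqL m).countP p ≤ m := by
    have := List.countP_le_length (p := p) (l := seqL m); simpa using this
  have hpt : ∀ l ∈ perms m,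
      (List.permutations'Aux (m+1) l).countP (fun t => hdB p t && decide (dsc p t = k))
      = ((if p (m+1) = true then 1 else 0) + ((seqL m).countP p - k)) * (if (hdB p l && decide (dsc p l + 1 = k)) = true then 1 else 0)
        + (if p (m+1) = true then 1 else 0) * (if (hdB q l && decide (dsc p l = k)) = true then 1 else 0)
        + (m + 1 + k - (seqL m).countP p) * (if (hdB p l && decide (dsc p l = k)) = true then 1 else 0) := by
    intro l hl
    have hperm := mem_perms hl
    have hlen : l.length = m := by rw [hperm.length_eq, seqL_length]
    have hlt : ∀ a ∈ l, a < m + 1 := fun a ha => seqL_lt m a (hperm.mem_iff.mp ha)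
    have hcP : l.countP p = (seqL m).countP p := hperm.countP_eq p
    have hsplit := count_split p l
    have hne : l ≠ [] := by intro hc; rw [hc] at hlen; simp at hlen; omega
    obtain ⟨a0, t0, rfl⟩ := List.exists_cons_of_ne_nil hne
    have hhd : hdB q (a0 :: t0) = !hdB p (a0 :: t0) := by simp [hqp a0]
    rw [key_count p p (m+1) k _ hlt]
    cases hb : hdB p (a0 :: t0) with
    | true =>
      have e0 : hdB q (a0 :: t0) = false := by rw [hhd, hb]; rfl
      have hs2 : 1 + dsc p (a0 :: t0) + asc p (a0 :: t0) = (seqL m).countP p := by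
        rw [← hcP, ← hsplit, hb]; simp
      rw [hlen]
      by_cases hqx : p (m+1) = true <;>
        simp only [hqx, hb, e0, Bool.false_and, Bool.true_and, Bool.and_eq_true, decide_eq_true_eq, if_true, if_false, Bool.false_eq_true, true_and, false_and, and_true, and_false, mul_zero, mul_one, one_mul, zero_mul, add_zero, zero_add] <;>
        split_ifs <;> omega
    | false =>
      have e0 : hdB q (a0 :: t0) = true := by rw [hhd, hb]; rfl
      by_cases hqx : p (m+1) = true <;>
        simp only [hqx, hb, e0, Bool.false_and, Bool.true_and, Bool.and_eq_true, decide_eq_true_eq, if_true, if_false, Bool.false_eq_true, true_and, false_and, and_true, and_false, mul_zero, mul_one, one_mul, zero_mul, add_zero, zero_add] <;>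
        split_ifs <;> omega
  have := sum_map_eq3 _ _ _ _ _ _ _ (perms m) hpt
  rw [cnt, perms_succ, countP_flatMap, this, cnt_shift]
  rfl

@[simp] lemma prevC_zero (f : ℕ → ℕ) : prevC f 0 = 0 := rfl
@[simp] lemma prevC_succ (f : ℕ → ℕ) (k : ℕ) : prevC f (k+1) = f k := rfl

def epB (n : ℕ) : Bool := n % 2 == 0
def opB (n : ℕ) : Bool := n % 2 == 1

lemma epB_iff (n : ℕ) : epB n = true ↔ n % 2 = 0 := by simp [epB]
lemma opB_iff (n : ℕ) : opB n = true ↔ n % 2 = 1 := by simp [opB]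
lemma opB_not_epB (n : ℕ) : opB n = !epB n := by
  rcases Nat.mod_two_eq_zero_or_one n with h | h <;> simp [opB, epB, h]
lemma epB_not_opB (n : ℕ) : epB n = !opB n := by
  rcases Nat.mod_two_eq_zero_or_one n with h | h <;> simp [opB, epB, h]

lemma asc_slack (p : ℕ → Bool) (b : ℕ) (hpb : p b = true) :
    ∀ (l : List ℕ) (c : ℕ), b ∈ l → (∀ a ∈ l, a ≤ b) → c ≤ b → 1 ≤ asc p (c :: l)
  | [], _, hb, _, _ => by simp at hb
  | [d], c, hb, hall, hc => by
    have hbd : b = d := by simpa using hb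
    subst hbd
    simp [asc_cons2, hc, hpb]
  | d :: e :: t, c, hb, hall, hc => by
    rcases List.mem_cons.mp hb with rfl | hb'
    · have h1 : (if c ≤ b ∧ p b = true then (1:ℕ) else 0) = 1 := if_pos ⟨hc, hpb⟩
      simp only [asc_cons2, h1]
      omega
    · have ih := asc_slack p b hpb (e :: t) d hb'
        (fun a ha => hall a (List.mem_cons_of_mem _ ha))
        (hall d List.mem_cons_self)
      have h2 : asc p (c :: d :: e :: t)
          = (if c ≤ d ∧ p d = true then 1 else 0) + asc p (d :: e :: t) := rfl
      omega

lemma dsc_bound_max (p : ℕ → Bool) (l : List ℕ) (b : ℕ) (hb : b ∈ l) (hpb : p b = true)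
    (hall : ∀ a ∈ l, a ≤ b) : dsc p l + 1 ≤ l.countP p := by
  cases l with
  | nil => simp at hb
  | cons a t =>
    have hsplit := count_split p (a :: t)
    rcases List.mem_cons.mp hb with hba | hb'
    · subst hba
      have hh : hdB p (b :: t) = true := by simpa using hpb
      rw [hh] at hsplit
      simp only [if_true] at hsplit
      omega
    · have h1 : 1 ≤ asc p (a :: t) :=
        asc_slack p b hpb t a hb' (fun x hx => hall x (List.mem_cons_of_mem _ hx))
          (hall a List.mem_cons_self)
      omega

lemma mem_seqL_self (m : ℕ) (hm : 1 ≤ m) : m ∈ seqL m := by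
  cases m with
  | zero => omega
  | succ m => simp [seqL]

lemma cnt_vanish_max (q p : ℕ → Bool) (k m : ℕ) (hm : 1 ≤ m) (hpm : p m = true)
    (hk : (seqL m).countP p ≤ k) : cnt q p k m = 0 := by
  apply List.countP_eq_zero.mpr
  intro l hl
  simp only [Bool.and_eq_true, decide_eq_true_eq, not_and]
  intro _ hc
  have hperm := mem_perms hl
  have hmem : m ∈ l := hperm.mem_iff.mpr (mem_seqL_self m hm)
  have hall : ∀ a ∈ l, a ≤ m := fun a ha => by
    have := seqL_lt m a (hperm.mem_iff.mp ha); omega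
  have hb := dsc_bound_max p l m hmem hpm hall
  have hcP := hperm.countP_eq p
  omega

lemma cnt_vanish_head (p : ℕ → Bool) (k m : ℕ) (hk : (seqL m).countP p ≤ k) :
    cnt p p k m = 0 := by
  apply List.countP_eq_zero.mpr
  intro l hl
  simp only [Bool.and_eq_true, decide_eq_true_eq, not_and]
  intro hhd hc
  have hsplit := count_split p l
  rw [hhd] at hsplit
  have hcP := (mem_perms hl).countP_eq p
  simp only [if_true] at hsplit
  omega

lemma count_parity : ∀ m : ℕ, (seqL m).countP epB = m / 2 ∧ (seqL m).countP opB = (m + 1) / 2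
  | 0 => by simp [seqL]
  | m + 1 => by
    have ih := count_parity m
    simp only [seqL, List.countP_cons, ih.1, ih.2]
    constructor
    · by_cases h : (m+1) % 2 = 0
      · rw [if_pos ((epB_iff _).mpr h)]; omega
      · rw [if_neg (fun hc => h ((epB_iff _).mp hc))]; omega
    · by_cases h : (m+1) % 2 = 1
      · rw [if_pos ((opB_iff _).mpr h)]; omega
      · rw [if_neg (fun hc => h ((opB_iff _).mp hc))]; omega

lemma perms_one : perms 1 = [[1]] := rfl

lemma base_one (k : ℕ) :
    cnt opB epB k 1 = cnt opB opB k 1 ∧ cnt epB epB k 1 = cnt epB opB (k+1) 1 ∧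
      cnt epB opB 0 1 = 0 := by
  have h1 : opB 1 = true := rfl
  have h2 : epB 1 = false := rfl
  refine ⟨?_, ?_, ?_⟩ <;>
    simp [cnt, perms_one, List.countP_cons, h1, h2] <;> rfl

/-- The main theorem at the level of lists. -/
theorem main_list : ∀ m : ℕ, 1 ≤ m → ∀ k : ℕ,
    cnt opB epB k m = cnt opB opB k m ∧ cnt epB epB k m = cnt epB opB (k+1) m ∧
      cnt epB opB 0 m = 0 := by
  intro m
  induction m with
  | zero => intro h; omega
  | succ m ih =>
    intro _ k
    by_cases hm1 : m = 0
    · subst hm1; exact base_one k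
    · have hm : 1 ≤ m := by omega
      have IH := ih hm
      have hC : ∀ j, cnt opB opB j m = cnt opB epB j m := fun j => ((IH j).1).symm
      have hD : ∀ j, cnt epB opB j m = prevC (fun i => cnt epB epB i m) j := by
        intro j
        cases j with
        | zero => exact (IH 0).2.2
        | succ j => exact ((IH j).2.1).symm
      have hCf : (fun j => cnt opB opB j m) = (fun j => cnt opB epB j m) := funext hC
      have hDf : (fun j => cnt epB opB j m) = (fun j => prevC (fun i => cnt epB epB i m) j) :=
        funext hD
      set E := (seqL m).countP epB with hE
      set O := (seqL m).countP opB with hO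
      have hEO := count_parity m
      rw [← hE, ← hO] at hEO
      obtain ⟨hE2, hO2⟩ := hEO
      have hEm : E ≤ m := by
        rw [hE]
        have := List.countP_le_length (p := epB) (l := seqL m); simpa using this
      have hOm : O ≤ m := by
        rw [hO]
        have := List.countP_le_length (p := opB) (l := seqL m); simpa using this
      -- recursions
      have rA := recDiff opB epB opB_not_epB m k hm
      have rC := recSame epB opB epB_not_opB m k hm
      have rB := recSame opB epB opB_not_epB m k hm
      have rD0 := recDiff epB opB epB_not_opB m (k+1) hm
      have rDz := recDiff epB opB epB_not_opB m 0 hm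
      rw [← hE] at rA rB
      rw [← hO] at rC rD0 rDz
      refine ⟨?_, ?_, ?_⟩
      · -- A = C at m+1
        rw [rA, rC, hCf, hC k, hD k]
        by_cases hx : opB (m+1) = true
        · -- m even, O = E, epB m = true
          have h1 : (if opB (m+1) = true then (1:ℕ) else 0) = 1 := if_pos hx
          have hOE : O = E := by
            rw [opB_iff] at hx; omega
          have hem : epB m = true := by
            rw [epB_iff]; rw [opB_iff] at hx; omega
          rw [h1, hOE]
          cases k with
          | zero =>
            simp only [prevC_zero, mul_zero, zero_add, add_zero, mul_one, one_mul]
            have hc : 1 + (m - E) = m + 1 - E := by omega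
            rw [hc]
          | succ j =>
            simp only [prevC_succ]
            have hc1 : 1 + (m - E) + (j+1) = m + 1 + (j+1) - E := by omega
            rw [hc1]
            by_cases hj : j < E
            · have hc2 : E + 1 - (j+1) = E - j := by omega
              have hc3 : 1 + (E - (j+1)) = E - j := by omega
              rw [hc2, hc3]
              ring
            · have hz : cnt opB epB j m = 0 := by
                apply cnt_vanish_max opB epB j m hm hem
                rw [← hE]; omega
              rw [hz]
              ring
        · -- m odd, O = E + 1
          have h1 : (if opB (m+1) = true then (1:ℕ) else 0) = 0 := if_neg hx
          have hOE : O = E + 1 := by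
            have hxo : ¬ (m+1) % 2 = 1 := fun hc => hx ((opB_iff (m+1)).mpr hc)
            omega
          rw [h1, hOE]
          have hc1 : 0 + (m - E) + k = m + 1 + k - (E + 1) := by omega
          have hc2 : (0:ℕ) + (E + 1 - k) = E + 1 - k := by omega
          rw [hc1, hc2]
          ring
      · -- B = D (k+1) at m+1
        rw [rB, rD0, hCf, hDf, hD (k+1)]
        simp only [prevC_succ]
        by_cases hx : epB (m+1) = true
        · -- m odd, O = E + 1
          have h1 : (if epB (m+1) = true then (1:ℕ) else 0) = 1 := if_pos hx
          have hOE : O = E + 1 := by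
            rw [epB_iff] at hx; omega
          rw [h1, hOE]
          have hc1 : m + 1 + k - E = 1 + (m - (E + 1)) + (k + 1) := by omega
          have hc2 : E + 1 + 1 - (k + 1) = E + 1 - k := by omega
          rw [hc1, hc2]
          cases k with
          | zero =>
            simp only [prevC_zero, mul_zero, zero_add, add_zero]
            try ring
          | succ j =>
            simp only [prevC_succ]
            by_cases hj : j < E
            · have hc3 : 1 + (E - (j+1)) = E - j := by omega
              have hc4 : E + 1 - (j + 1) = E - j := by omega
              rw [hc3, hc4]
              ring
            · have hz : cnt epB epB j m = 0 := by
                apply cnt_vanish_head epB j m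
                rw [← hE]; omega
              rw [hz]
              ring
        · -- m even, O = E
          have h1 : (if epB (m+1) = true then (1:ℕ) else 0) = 0 := if_neg hx
          have hOE : O = E := by
            have hxo : ¬ (m+1) % 2 = 0 := fun hc => hx ((epB_iff (m+1)).mpr hc)
            omega
          rw [h1, hOE]
          have hc1 : m + 1 + k - E = 0 + (m - E) + (k + 1) := by omega
          have hc2 : E + 1 - (k + 1) = 0 + (E - k) := by omega
          rw [hc1, hc2]
          ring
      · -- D at 0 vanishes at m+1
        rw [rDz, hD 0]
        simp [prevC_zero]

/-! ### Translation to permutations of `Fin m` -/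

def TL {m : ℕ} (σ : Equiv.Perm (Fin m)) : List ℕ := List.ofFn (fun i => (σ i : ℕ) + 1)

def gFn (p : ℕ → Bool) (m : ℕ) (f : Fin m → ℕ) (i : Fin m) : ℕ :=
  if h : (i : ℕ) + 1 < m then
    (if f ⟨(i : ℕ) + 1, h⟩ < f i ∧ p (f ⟨(i : ℕ) + 1, h⟩) = true then 1 else 0)
  else 0

lemma gFn_succ_eq (p : ℕ → Bool) (m : ℕ) (f : Fin (m+1) → ℕ) (i : Fin m) :
    gFn p (m+1) f i.succ = gFn p m (f ∘ Fin.succ) i := by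
  unfold gFn
  by_cases h : (i : ℕ) + 1 < m
  · have h' : ((i.succ : Fin (m+1)) : ℕ) + 1 < m + 1 := by
      simp only [Fin.val_succ]; omega
    rw [dif_pos h', dif_pos h]
    have e1 : f ⟨((i.succ : Fin (m+1)) : ℕ) + 1, h'⟩ = (f ∘ Fin.succ) ⟨(i : ℕ) + 1, h⟩ := by
      apply congrArg
      apply Fin.ext
      simp [Fin.val_succ]
    have e2 : f i.succ = (f ∘ Fin.succ) i := rfl
    rw [e1, e2]
  · have h' : ¬ (((i.succ : Fin (m+1)) : ℕ) + 1 < m + 1) := by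
      simp only [Fin.val_succ]; omega
    rw [dif_neg h', dif_neg h]

lemma sum_gFn (p : ℕ → Bool) : ∀ (m : ℕ) (f : Fin m → ℕ),
    (∑ i, gFn p m f i) = dsc p (List.ofFn f)
  | 0, f => by simp [gFn]
  | m + 1, f => by
    rw [Fin.sum_univ_succ]
    have hsum : ∑ i : Fin m, gFn p (m+1) f i.succ = dsc p (List.ofFn (f ∘ Fin.succ)) := by
      rw [Finset.sum_congr rfl (fun i _ => gFn_succ_eq p m f i), sum_gFn p m (f ∘ Fin.succ)]
    rw [hsum]
    have hofn : List.ofFn f = f 0 :: List.ofFn (f ∘ Fin.succ) := by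
      simp [List.ofFn_succ]; try rfl
    rw [hofn]
    cases m with
    | zero =>
      have h0 : gFn p 1 f 0 = 0 := by unfold gFn; rw [dif_neg]; omega
      simp [h0]
    | succ m' =>
      have hofn2 : List.ofFn (f ∘ Fin.succ) = (f ∘ Fin.succ) 0 :: List.ofFn ((f ∘ Fin.succ) ∘ Fin.succ) := by
        simp [List.ofFn_succ]; try rfl
      rw [hofn2, dsc_cons2, ← hofn2]
      have h0 : gFn p (m'+1+1) f 0 = if (f ∘ Fin.succ) 0 < f 0 ∧ p ((f ∘ Fin.succ) 0) = true then 1 else 0 := by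
        unfold gFn
        rw [dif_pos (show ((0 : Fin (m'+1+1)) : ℕ) + 1 < m'+1+1 by simp)]
        have e1 : f ⟨((0 : Fin (m'+1+1)) : ℕ) + 1, by simp⟩ = (f ∘ Fin.succ) 0 := by
          apply congrArg; apply Fin.ext; simp
        rw [e1]
      rw [h0]

lemma card_pairs (p : ℕ → Bool) (m : ℕ) (f : Fin m → ℕ) (P : ℕ → Prop) [DecidablePred P]
    (hP : ∀ n, P n ↔ p n = true) :
    (Finset.univ.filter (fun q : Fin m × Fin m =>
      (q.2 : ℕ) = (q.1 : ℕ) + 1 ∧ f q.2 < f q.1 ∧ P (f q.2))).card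
    = dsc p (List.ofFn f) := by
  have hPe : ∀ n, P n = (p n = true) := fun n => propext (hP n)
  simp only [hPe]
  rw [Finset.card_filter, Fintype.sum_prod_type, ← sum_gFn p m f]
  apply Finset.sum_congr rfl
  intro i _
  by_cases h : (i : ℕ) + 1 < m
  · have key : ∀ j : Fin m, (if ((j:ℕ) = (i:ℕ)+1 ∧ f j < f i ∧ p (f j) = true) then (1:ℕ) else 0)
        = if j = ⟨(i:ℕ)+1, h⟩ then (if f ⟨(i:ℕ)+1,h⟩ < f i ∧ p (f ⟨(i:ℕ)+1,h⟩) = true then 1 else 0) else 0 := by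
      intro j
      by_cases hj : j = ⟨(i:ℕ)+1, h⟩
      · subst hj; simp
      · have hv : ¬ ((j:ℕ) = (i:ℕ)+1) := fun hc => hj (Fin.ext hc)
        simp [hv, hj]
    rw [Finset.sum_congr rfl (fun j _ => key j), Finset.sum_ite_eq']
    rw [if_pos (Finset.mem_univ _)]
    unfold gFn
    rw [dif_pos h]
  · have hz : ∀ j : Fin m, (if ((j:ℕ) = (i:ℕ)+1 ∧ f j < f i ∧ p (f j) = true) then (1:ℕ) else 0) = 0 := by
      intro j
      have : ¬ ((j:ℕ) = (i:ℕ)+1) := by have := j.isLt; omega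
      simp [this]
    rw [Finset.sum_congr rfl (fun j _ => hz j)]
    unfold gFn
    rw [dif_neg h]
    simp

lemma epB_even (n : ℕ) : Even n ↔ epB n = true := by
  rw [epB_iff, Nat.even_iff]

lemma opB_odd (n : ℕ) : Odd n ↔ opB n = true := by
  rw [opB_iff, Nat.odd_iff]

lemma seqL_mem (m : ℕ) : ∀ a : ℕ, a ∈ seqL m ↔ 1 ≤ a ∧ a ≤ m := by
  induction m with
  | zero => intro a; simp [seqL]; omega
  | succ m ih =>
    intro a
    simp only [seqL, List.mem_cons, ih]
    omega

lemma seqL_nodup (m : ℕ) : (seqL m).Nodup := by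
  induction m with
  | zero => simp [seqL]
  | succ m ih =>
    simp only [seqL, List.nodup_cons]
    refine ⟨fun hc => ?_, ih⟩
    have := seqL_lt m _ hc
    omega

lemma perms_nodup (m : ℕ) : (perms m).Nodup := by
  have h1 := List.nodup_permutations (seqL m) (seqL_nodup m)
  exact (List.permutations_perm_permutations' (seqL m)).nodup h1

lemma TL_perm {m : ℕ} (σ : Equiv.Perm (Fin m)) : (TL σ).Perm (seqL m) := by
  apply List.perm_of_nodup_nodup_toFinset_eq
  · rw [TL, List.nodup_ofFn]
    intro i j hij
    simp only at hij
    exact σ.injective (Fin.ext (by omega))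
  · exact seqL_nodup m
  · ext a
    simp only [List.mem_toFinset, TL, List.mem_ofFn, Set.mem_range, seqL_mem]
    constructor
    · rintro ⟨i, rfl⟩
      have := (σ i).isLt
      omega
    · rintro ⟨h1, h2⟩
      refine ⟨σ.symm ⟨a - 1, by omega⟩, ?_⟩
      rw [Equiv.apply_symm_apply]
      simp; omega

lemma TL_mem {m : ℕ} (σ : Equiv.Perm (Fin m)) : TL σ ∈ perms m :=
  List.mem_permutations'.mpr (TL_perm σ)

lemma TL_inj {m : ℕ} : Function.Injective (TL (m := m)) := by
  intro σ τ h
  have h2 := List.ofFn_injective h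
  ext i
  have hi := congrFun h2 i
  omega

lemma TL_surj {m : ℕ} (l : List ℕ) (hl : l ∈ perms m) : ∃ σ : Equiv.Perm (Fin m), TL σ = l := by
  have hperm := mem_perms hl
  have hlen : l.length = m := by rw [hperm.length_eq, seqL_length]
  have hnodup : l.Nodup := ((seqL_nodup m).perm hperm.symm : _)
  have hmemb : ∀ a ∈ l, 1 ≤ a ∧ a ≤ m := fun a ha => (seqL_mem m a).mp (hperm.mem_iff.mp ha)
  have hget : ∀ i : Fin m, 1 ≤ l.get (Fin.cast hlen.symm i) ∧ l.get (Fin.cast hlen.symm i) ≤ m :=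
    fun i => hmemb _ (l.get_mem _)
  set f0 : Fin m → Fin m := fun i => ⟨l.get (Fin.cast hlen.symm i) - 1, by
    have := hget i; omega⟩ with hf0
  have hinj : Function.Injective f0 := by
    intro i j hij
    have h1 : l.get (Fin.cast hlen.symm i) = l.get (Fin.cast hlen.symm j) := by
      have hv := congrArg Fin.val hij
      simp only [hf0] at hv
      have := hget i; have := hget j
      omega
    have := (hnodup.get_inj_iff).mp h1
    have := congrArg Fin.val this
    exact Fin.ext (by simpa using this)
  refine ⟨Equiv.ofBijective f0 (Finite.injective_iff_bijective.mp hinj), ?_⟩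
  apply List.ext_get
  · simp [TL, hlen]
  · intro n h1 h2
    have h3 : n < m := by simpa [TL] using h1
    simp only [TL]
    rw [List.get_ofFn]
    simp only [Equiv.ofBijective_apply, hf0]
    have hkey : ∀ (I : Fin l.length), I = ⟨n, h2⟩ → l.get I - 1 + 1 = l.get ⟨n, h2⟩ := by
      intro I hI
      rw [hI]
      have := hmemb _ (l.get_mem ⟨n, h2⟩)
      omega
    apply hkey
    apply Fin.ext
    rfl

lemma count_eq (m : ℕ) (G : Equiv.Perm (Fin m) → Prop) [DecidablePred G] (G' : List ℕ → Bool)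
    (h : ∀ σ, G σ ↔ G' (TL σ) = true) :
    (Finset.univ.filter G).card = (perms m).countP G' := by
  have hnodup := perms_nodup m
  have hr : (perms m).countP G' = ((perms m).toFinset.filter (fun l => G' l = true)).card := by
    rw [← List.toFinset_filter, List.toFinset_card_of_nodup (hnodup.filter _),
      List.countP_eq_length_filter]
  rw [hr]
  apply Finset.card_bij (fun σ _ => TL σ)
  · intro σ hσ
    rw [Finset.mem_filter]
    refine ⟨List.mem_toFinset.mpr (TL_mem σ), ?_⟩
    exact (h σ).mp (Finset.mem_filter.mp hσ).2
  · intro σ₁ _ σ₂ _ hh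
    exact TL_inj hh
  · intro l hlf
    rw [Finset.mem_filter, List.mem_toFinset] at hlf
    obtain ⟨σ, rfl⟩ := TL_surj l hlf.1
    refine ⟨σ, ?_, rfl⟩
    rw [Finset.mem_filter]
    exact ⟨Finset.mem_univ _, (h σ).mpr hlf.2⟩

lemma desEndE_eq (m : ℕ) (σ : Equiv.Perm (Fin m)) : desEndE m σ = dsc epB (TL σ) := by
  unfold desEndE
  have h1 : ∀ q : Fin m × Fin m,
      ((q.2 : ℕ) = (q.1 : ℕ) + 1 ∧ σ q.2 < σ q.1 ∧ Even ((σ q.2 : ℕ) + 1)) ↔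
      ((q.2 : ℕ) = (q.1 : ℕ) + 1 ∧ (fun i => (σ i : ℕ) + 1) q.2 < (fun i => (σ i : ℕ) + 1) q.1
        ∧ Even ((fun i => (σ i : ℕ) + 1) q.2)) := by
    intro q
    simp only [Fin.lt_def]
    constructor
    · rintro ⟨a, b, c⟩; exact ⟨a, by omega, c⟩
    · rintro ⟨a, b, c⟩; exact ⟨a, by omega, c⟩
  rw [Finset.filter_congr (fun q _ => h1 q)]
  exact card_pairs epB m (fun i => (σ i : ℕ) + 1) Even epB_even

lemma desEndO_eq (m : ℕ) (σ : Equiv.Perm (Fin m)) : desEndO m σ = dsc opB (TL σ) := by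
  unfold desEndO
  have h1 : ∀ q : Fin m × Fin m,
      ((q.2 : ℕ) = (q.1 : ℕ) + 1 ∧ σ q.2 < σ q.1 ∧ Odd ((σ q.2 : ℕ) + 1)) ↔
      ((q.2 : ℕ) = (q.1 : ℕ) + 1 ∧ (fun i => (σ i : ℕ) + 1) q.2 < (fun i => (σ i : ℕ) + 1) q.1
        ∧ Odd ((fun i => (σ i : ℕ) + 1) q.2)) := by
    intro q
    simp only [Fin.lt_def]
    constructor
    · rintro ⟨a, b, c⟩; exact ⟨a, by omega, c⟩
    · rintro ⟨a, b, c⟩; exact ⟨a, by omega, c⟩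
  rw [Finset.filter_congr (fun q _ => h1 q)]
  exact card_pairs opB m (fun i => (σ i : ℕ) + 1) Odd opB_odd

lemma TL_head {m : ℕ} (σ : Equiv.Perm (Fin (m+1))) (q : ℕ → Bool) :
    hdB q (TL σ) = q ((σ 0 : ℕ) + 1) := by
  have hTL : TL σ = ((σ 0 : ℕ) + 1) :: List.ofFn (fun i : Fin m => (σ i.succ : ℕ) + 1) := by
    simp [TL, List.ofFn_succ]; try rfl
  rw [hTL, hdB_cons]

lemma firstOdd_iff_s14 (m : ℕ) (σ : Equiv.Perm (Fin m)) (hm : 1 ≤ m) :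
    firstOdd m σ ↔ hdB opB (TL σ) = true := by
  cases m with
  | zero => omega
  | succ n =>
    rw [TL_head σ opB]
    unfold firstOdd
    constructor
    · rintro ⟨i, hi0, hodd⟩
      have : i = 0 := Fin.ext (by simpa using hi0)
      subst this
      exact (opB_odd _).mp hodd
    · intro h
      exact ⟨0, by simp, (opB_odd _).mpr h⟩

lemma firstEven_iff_s14 (m : ℕ) (σ : Equiv.Perm (Fin m)) (hm : 1 ≤ m) :
    firstEven m σ ↔ hdB epB (TL σ) = true := by
  cases m with
  | zero => omega
  | succ n =>
    rw [TL_head σ epB]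
    unfold firstEven
    constructor
    · rintro ⟨i, hi0, heven⟩
      have : i = 0 := Fin.ext (by simpa using hi0)
      subst this
      exact (epB_even _).mp heven
    · intro h
      exact ⟨0, by simp, (epB_even _).mpr h⟩

theorem stmt_14 (n k : ℕ) (hn : 1 ≤ n) :
    P0 k n = Q1 k n ∧ P1 k n = Q0 (k+1) n := by
  have hmain := main_list n hn k
  have hP0 : P0 k n = cnt opB epB k n := by
    unfold P0 cnt
    apply count_eq
    intro σ
    rw [firstOdd_iff_s14 n σ hn, desEndE_eq]
    simp
  have hQ1 : Q1 k n = cnt opB opB k n := by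
    unfold Q1 cnt
    apply count_eq
    intro σ
    rw [firstOdd_iff_s14 n σ hn, desEndO_eq]
    simp
  have hP1 : P1 k n = cnt epB epB k n := by
    unfold P1 cnt
    apply count_eq
    intro σ
    rw [firstEven_iff_s14 n σ hn, desEndE_eq]
    simp
  have hQ0 : Q0 (k+1) n = cnt epB opB (k+1) n := by
    unfold Q0 cnt
    apply count_eq
    intro σ
    rw [firstEven_iff_s14 n σ hn, desEndO_eq]
    simp
  exact ⟨by rw [hP0, hQ1]; exact hmain.1, by rw [hP1, hQ0]; exact hmain.2.1⟩

end DescentParity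
end

section
/- For all integers n ≥ 1: M_{k,2n} = P_{0,k,2n} + P_{1,k,2n} for all k ≥ 0, and M_{k,2n+1} = Q_{0,k,2n+1} + Q_{1,k,2n+1} for all k ≥ 0. (The first identity is realized by the bijection sending σ to the complement of its reverse on permutations of even length, and the second by the same bijection on permutations of odd length.) -/
namespace DescentParity

private def F (m : ℕ) (σ : Equiv.Perm (Fin m)) : Equiv.Perm (Fin m) :=
  (Fin.revPerm.trans σ).trans Fin.revPerm

private lemma F_apply (m : ℕ) (σ : Equiv.Perm (Fin m)) (j : Fin m) :
    F m σ j = Fin.rev (σ (Fin.rev j)) := rfl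

private lemma F_F (m : ℕ) (σ : Equiv.Perm (Fin m)) : F m (F m σ) = σ := by
  ext j
  simp [F_apply, Fin.rev_rev]

private lemma desBegO_even (m : ℕ) (hm : Even m) (σ : Equiv.Perm (Fin m)) :
    desBegO m σ = desEndE m (F m σ) := by
  unfold desBegO desEndE
  apply Finset.card_bij (fun p _ => (Fin.rev p.2, Fin.rev p.1))
  · rintro ⟨a, b⟩ hp
    simp only [Finset.mem_filter, Finset.mem_univ, true_and] at hp ⊢
    obtain ⟨hab, hlt, hodd⟩ := hp
    have hb := b.isLt
    have ha := a.isLt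
    refine ⟨?_, ?_, ?_⟩
    · simp only [Fin.val_rev]; omega
    · simp only [F_apply, Fin.rev_rev, Fin.rev_lt_rev]; exact hlt
    · simp only [F_apply, Fin.rev_rev, Fin.val_rev]
      have hv := (σ a).isLt
      rw [Nat.even_iff]
      rw [Nat.odd_iff] at hodd
      obtain ⟨t, ht⟩ := hm
      omega
  · rintro ⟨a, b⟩ ha ⟨c, d⟩ hc h
    simp only [Prod.mk.injEq] at h
    obtain ⟨h1, h2⟩ := h
    have := Fin.rev_injective h1
    have := Fin.rev_injective h2
    simp_all
  · rintro ⟨a, b⟩ hp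
    refine ⟨(Fin.rev b, Fin.rev a), ?_, by simp [Fin.rev_rev]⟩
    simp only [Finset.mem_filter, Finset.mem_univ, true_and] at hp ⊢
    obtain ⟨hab, hlt, heven⟩ := hp
    have hb := b.isLt
    have ha := a.isLt
    simp only [F_apply, Fin.rev_rev, Fin.rev_lt_rev, Fin.val_rev] at *
    refine ⟨by omega, hlt, ?_⟩
    have hv := (σ (Fin.rev a)).isLt
    rw [Nat.odd_iff]
    rw [Nat.even_iff] at heven
    obtain ⟨t, ht⟩ := hm
    omega

private lemma desBegO_odd (m : ℕ) (hm : Odd m) (σ : Equiv.Perm (Fin m)) :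
    desBegO m σ = desEndO m (F m σ) := by
  unfold desBegO desEndO
  apply Finset.card_bij (fun p _ => (Fin.rev p.2, Fin.rev p.1))
  · rintro ⟨a, b⟩ hp
    simp only [Finset.mem_filter, Finset.mem_univ, true_and] at hp ⊢
    obtain ⟨hab, hlt, hodd⟩ := hp
    have hb := b.isLt
    have ha := a.isLt
    refine ⟨?_, ?_, ?_⟩
    · simp only [Fin.val_rev]; omega
    · simp only [F_apply, Fin.rev_rev, Fin.rev_lt_rev]; exact hlt
    · simp only [F_apply, Fin.rev_rev, Fin.val_rev]
      have hv := (σ a).isLt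
      rw [Nat.odd_iff]
      rw [Nat.odd_iff] at hodd
      obtain ⟨t, ht⟩ := hm
      omega
  · rintro ⟨a, b⟩ ha ⟨c, d⟩ hc h
    simp only [Prod.mk.injEq] at h
    obtain ⟨h1, h2⟩ := h
    have := Fin.rev_injective h1
    have := Fin.rev_injective h2
    simp_all
  · rintro ⟨a, b⟩ hp
    refine ⟨(Fin.rev b, Fin.rev a), ?_, by simp [Fin.rev_rev]⟩
    simp only [Finset.mem_filter, Finset.mem_univ, true_and] at hp ⊢
    obtain ⟨hab, hlt, heven⟩ := hp
    have hb := b.isLt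
    have ha := a.isLt
    simp only [F_apply, Fin.rev_rev, Fin.rev_lt_rev, Fin.val_rev] at *
    refine ⟨by omega, hlt, ?_⟩
    have hv := (σ (Fin.rev a)).isLt
    rw [Nat.odd_iff]
    rw [Nat.odd_iff] at heven
    obtain ⟨t, ht⟩ := hm
    omega

/-- Transfer a count through the involution `F`. -/
private lemma count_via_F (m k : ℕ) (g : Equiv.Perm (Fin m) → ℕ)
    (h : ∀ σ, desBegO m σ = g (F m σ)) :
    (Finset.univ.filter (fun σ : Equiv.Perm (Fin m) => desBegO m σ = k)).card =
    (Finset.univ.filter (fun τ : Equiv.Perm (Fin m) => g τ = k)).card := by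
  apply Finset.card_bij (fun σ _ => F m σ)
  · intro σ hσ
    simp only [Finset.mem_filter, Finset.mem_univ, true_and] at hσ ⊢
    rw [← h σ]; exact hσ
  · intro a _ b _ hab
    have := congrArg (F m) hab
    rwa [F_F, F_F] at this
  · intro τ hτ
    simp only [Finset.mem_filter, Finset.mem_univ, true_and] at hτ
    refine ⟨F m τ, Finset.mem_filter.mpr ⟨Finset.mem_univ _, ?_⟩, F_F m τ⟩
    rw [h (F m τ), F_F]; exact hτ

private lemma firstEven_iff_not_firstOdd (m : ℕ) (hm : 0 < m) (σ : Equiv.Perm (Fin m)) :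
    firstEven m σ ↔ ¬ firstOdd m σ := by
  unfold firstEven firstOdd
  constructor
  · rintro ⟨i, hi, he⟩ ⟨j, hj, ho⟩
    have : i = j := Fin.ext (by omega)
    subst this
    exact (Nat.not_odd_iff_even.mpr he) ho
  · intro h
    refine ⟨⟨0, hm⟩, rfl, ?_⟩
    rcases Nat.even_or_odd ((σ ⟨0, hm⟩ : ℕ) + 1) with he | ho
    · exact he
    · exact absurd ⟨⟨0, hm⟩, rfl, ho⟩ h

private lemma split_count (m k : ℕ) (hm : 0 < m) (g : Equiv.Perm (Fin m) → ℕ) :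
    (Finset.univ.filter (fun σ : Equiv.Perm (Fin m) => g σ = k)).card =
    (Finset.univ.filter (fun σ : Equiv.Perm (Fin m) => firstOdd m σ ∧ g σ = k)).card +
    (Finset.univ.filter (fun σ : Equiv.Perm (Fin m) => firstEven m σ ∧ g σ = k)).card := by
  have h1 : (Finset.univ.filter (fun σ : Equiv.Perm (Fin m) => firstEven m σ ∧ g σ = k)) =
      (Finset.univ.filter (fun σ : Equiv.Perm (Fin m) => ¬ firstOdd m σ ∧ g σ = k)) := by
    apply Finset.filter_congr
    intro σ _
    simp [firstEven_iff_not_firstOdd m hm σ]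
  rw [h1]
  rw [← Finset.card_filter_add_card_filter_not
    (s := Finset.univ.filter (fun σ : Equiv.Perm (Fin m) => g σ = k))
    (p := fun σ => firstOdd m σ)]
  congr 1 <;> · rw [Finset.filter_filter]; congr 1; ext σ
                simp only [Finset.mem_filter, Finset.mem_univ, true_and]; tauto


theorem stmt_17 (n : ℕ) (hn : 1 ≤ n) :
    (∀ k : ℕ, M k (2*n) = P0 k (2*n) + P1 k (2*n)) ∧
    (∀ k : ℕ, M k (2*n+1) = Q0 k (2*n+1) + Q1 k (2*n+1)) := by
  constructor
  · intro k
    have h1 := count_via_F (2*n) k (desEndE (2*n)) (desBegO_even (2*n) (even_two_mul n))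
    have h2 := split_count (2*n) k (by omega) (desEndE (2*n))
    rw [M, P0, P1]
    omega
  · intro k
    have h1 := count_via_F (2*n+1) k (desEndO (2*n+1)) (desBegO_odd (2*n+1) ⟨n, by ring⟩)
    have h2 := split_count (2*n+1) k (by omega) (desEndO (2*n+1))
    rw [M, Q0, Q1]
    omega


end DescentParity
end

section
/- For all integers n ≥ 1 and all k with 0 ≤ k ≤ n, R_{k,2n} = R_{n−k,2n}; that is, the polynomial R_{2n}(x) = Σ_k R_{k,2n} xᵏ is symmetric. -/
namespace DescentParity

/-!
Entries are elements of `Fin m`, the entry `v` standing for `v + 1`, so `desBegE` counts the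
descents whose top `v` has `v + 1` even. Append an end marker to `σ`, read the result cyclically,
let the minimal entry `0` trade places with the marker, cut the cycle at the marker and negate all
entries. As `x ↦ -x` reverses the order of the nonzero entries, for `v ≠ 0` the entry `-v` is a
descent top of the new word exactly when `v` is not one of `σ`, i.e. `v` is last or followed by a
larger entry. Negation permutes the `n` values `v` of `Fin (2n)` with `v + 1` even, so this
involution turns `k` such descents into `n - k`.
-/

open Finset Equiv

section Adjacency

variable {m : ℕ} (σ : Perm (Fin m))

def Follows (v w : Fin m) : Prop := (σ.symm w : ℕ) = σ.symm v + 1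

def IsLast (v : Fin m) : Prop := (σ.symm v : ℕ) + 1 = m

def IsDescentTop (v : Fin m) : Prop := ∃ w, Follows σ v w ∧ w < v

variable {σ}

theorem Follows.ne {v w : Fin m} (h : Follows σ v w) : w ≠ v := by
  rintro rfl
  exact Nat.succ_ne_self _ h.symm

theorem Follows.unique {v w w' : Fin m} (h : Follows σ v w) (h' : Follows σ v w') : w = w' :=
  σ.symm.injective (Fin.ext (h.trans h'.symm))

theorem IsLast.not_follows {v w : Fin m} (h : IsLast σ v) : ¬ Follows σ v w := by
  unfold IsLast at h
  unfold Follows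
  have := (σ.symm w).isLt
  omega

theorem isLast_or_exists_follows (v : Fin m) : IsLast σ v ∨ ∃ w, Follows σ v w := by
  by_cases h : (σ.symm v : ℕ) + 1 < m
  · exact Or.inr ⟨σ ⟨_, h⟩, by simp [Follows]⟩
  · exact Or.inl (by have := (σ.symm v).isLt; unfold IsLast; omega)

theorem not_isDescentTop_iff {v : Fin m} :
    ¬ IsDescentTop σ v ↔ IsLast σ v ∨ ∃ w, Follows σ v w ∧ v < w := by
  constructor
  · intro h
    refine (isLast_or_exists_follows v).imp_right fun ⟨w, hw⟩ => ⟨w, hw, ?_⟩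
    exact lt_of_le_of_ne (not_lt.mp fun hlt => h ⟨w, hw, hlt⟩) hw.ne.symm
  · rintro (hlast | ⟨w, hw, hvw⟩) ⟨w', hw', hlt⟩
    · exact hlast.not_follows hw'
    · exact lt_asymm hvw (hw.unique hw' ▸ hlt)

open Classical in
theorem card_descents_eq_card_isDescentTop (P : Fin m → Prop) [DecidablePred P] :
    #{p : Fin m × Fin m | (p.2 : ℕ) = p.1 + 1 ∧ σ p.2 < σ p.1 ∧ P (σ p.1)} =
      #{v | P v ∧ IsDescentTop σ v} := by
  apply card_bij (fun p _ => σ p.1)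
  · rintro ⟨i, j⟩ hp
    simp only [mem_filter, mem_univ, true_and] at hp ⊢
    exact ⟨hp.2.2, σ j, by simpa [Follows] using hp.1, hp.2.1⟩
  · rintro ⟨i, j⟩ hp ⟨i', j'⟩ hp' h
    simp only [mem_filter, mem_univ, true_and] at hp hp'
    have hi : i = i' := σ.injective h
    subst hi
    exact Prod.ext rfl (Fin.ext (hp.1.trans hp'.1.symm))
  · intro v hv
    simp only [mem_filter, mem_univ, true_and] at hv
    obtain ⟨hP, w, hw, hlt⟩ := hv
    exact ⟨(σ.symm v, σ.symm w), by simpa [Follows] using ⟨hw, hlt, hP⟩, by simp⟩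

end Adjacency

section Rotation

variable {m : ℕ}

def rotateFun (z p : Fin m) : Fin m :=
  ⟨if (z : ℕ) < p then (p : ℕ) - z - 1
    else if (p : ℕ) = z then m - 1 - z else (p : ℕ) + m - z, by
    have := z.isLt; have := p.isLt; split_ifs <;> omega⟩

theorem rotateFun_injective (z : Fin m) : Function.Injective (rotateFun z) := by
  intro p q h
  have := z.isLt; have := p.isLt; have := q.isLt
  simp only [rotateFun, Fin.mk.injEq] at h
  apply Fin.ext
  split_ifs at h <;> omega

/-- Sends a position of the word `σ₀ ⋯ σ_{m-1}` to its position in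
`σ_{z+1} ⋯ σ_{m-1} σ_z σ₀ ⋯ σ_{z-1}`. -/
noncomputable def rotate (z : Fin m) : Perm (Fin m) :=
  Equiv.ofBijective (rotateFun z) (Finite.injective_iff_bijective.mp (rotateFun_injective z))

theorem rotate_val (z p : Fin m) : (rotate z p : ℕ) =
    if (z : ℕ) < p then (p : ℕ) - z - 1
    else if (p : ℕ) = z then m - 1 - z else (p : ℕ) + m - z :=
  rfl

theorem rotate_eq_succ_iff {z p : Fin m} (q : Fin m) (hp : p ≠ z) :
    (rotate z q : ℕ) = rotate z p + 1 ↔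
      if q = z then (p : ℕ) + 1 = m else (q : ℕ) = p + 1 := by
  have hp : (p : ℕ) ≠ z := Fin.val_injective.ne hp
  have := z.isLt; have := p.isLt; have := q.isLt
  rw [rotate_val, rotate_val]
  by_cases hq : q = z
  · subst hq; rw [if_pos rfl]; split_ifs <;> omega
  · have := Fin.val_injective.ne hq
    rw [if_neg hq]; split_ifs <;> omega

theorem rotate_rotate (z p : Fin m) : rotate (rotate z z) (rotate z p) = p := by
  have := z.isLt; have := p.isLt
  apply Fin.ext
  rw [rotate_val, rotate_val, rotate_val]
  split_ifs <;> omega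

end Rotation

section NegRotate

variable {m : ℕ} [NeZero m]

theorem _root_.Fin.neg_lt_neg_iff_of_ne_zero {u v : Fin m} (hu : u ≠ 0) (hv : v ≠ 0) :
    -u < -v ↔ v < u := by
  have hu : (u : ℕ) ≠ 0 := Fin.val_ne_zero_iff.mpr hu
  have hv : (v : ℕ) ≠ 0 := Fin.val_ne_zero_iff.mpr hv
  have := u.isLt; have := v.isLt
  rw [Fin.lt_def, Fin.lt_def, Fin.val_neg', Fin.val_neg', Nat.mod_eq_of_lt (by omega),
    Nat.mod_eq_of_lt (by omega)]
  omega

/-- The word `-σ_{z+1} ⋯ -σ_{m-1} 0 -σ₀ ⋯ -σ_{z-1}`, where `σ_z = 0`. -/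
noncomputable def negRotate (σ : Perm (Fin m)) : Perm (Fin m) :=
  ((Equiv.neg (Fin m)).trans (σ.symm.trans (rotate (σ.symm 0)))).symm

theorem negRotate_symm_apply (σ : Perm (Fin m)) (u : Fin m) :
    (negRotate σ).symm u = rotate (σ.symm 0) (σ.symm (-u)) := rfl

theorem negRotate_negRotate (σ : Perm (Fin m)) : negRotate (negRotate σ) = σ := by
  refine Equiv.symm_bijective.injective (Equiv.ext fun u => ?_)
  rw [negRotate_symm_apply, negRotate_symm_apply, negRotate_symm_apply, neg_zero, neg_neg,
    rotate_rotate]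

theorem follows_negRotate_neg_neg {σ : Perm (Fin m)} {v : Fin m} (hv : v ≠ 0) (u : Fin m) :
    Follows (negRotate σ) (-v) (-u) ↔ if u = 0 then IsLast σ v else Follows σ v u := by
  have hpos : σ.symm v ≠ σ.symm 0 := σ.symm.injective.ne hv
  simp only [Follows, IsLast, negRotate_symm_apply, neg_neg]
  simp only [rotate_eq_succ_iff _ hpos, σ.symm.injective.eq_iff]

theorem isDescentTop_negRotate_neg {σ : Perm (Fin m)} {v : Fin m} (hv : v ≠ 0) :
    IsDescentTop (negRotate σ) (-v) ↔ ¬ IsDescentTop σ v := by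
  rw [not_isDescentTop_iff]
  constructor
  · rintro ⟨w, hw, hlt⟩
    rw [← neg_neg w, follows_negRotate_neg_neg hv] at hw
    rw [← neg_neg w] at hlt
    split_ifs at hw with hw0
    · exact Or.inl hw
    · exact Or.inr ⟨-w, hw, (Fin.neg_lt_neg_iff_of_ne_zero hw0 hv).mp hlt⟩
  · rintro (hlast | ⟨w, hw, hvw⟩)
    · refine ⟨-0, by rwa [follows_negRotate_neg_neg hv, if_pos rfl], ?_⟩
      rw [neg_zero, Fin.pos_iff_ne_zero, neg_ne_zero]
      exact hv
    · have hw0 : w ≠ 0 := (Fin.zero_le v |>.trans_lt hvw).ne'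
      exact ⟨-w, by rwa [follows_negRotate_neg_neg hv, if_neg hw0],
        (Fin.neg_lt_neg_iff_of_ne_zero hw0 hv).mpr hvw⟩

open Classical in
theorem card_isDescentTop_negRotate_add (σ : Perm (Fin m)) {S : Finset (Fin m)} (hS0 : 0 ∉ S)
    (hS : ∀ v ∈ S, -v ∈ S) :
    #{v ∈ S | IsDescentTop (negRotate σ) v} + #{v ∈ S | IsDescentTop σ v} = #S := by
  have hne : ∀ v ∈ S, v ≠ 0 := fun v hv h => hS0 (h ▸ hv)
  have hneg : #{v ∈ S | IsDescentTop (negRotate σ) v} = #{v ∈ S | ¬ IsDescentTop σ v} := by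
    refine card_nbij' (fun v => -v) (fun v => -v) ?_ ?_ (fun v _ => neg_neg v)
      (fun v _ => neg_neg v)
    · intro v hv
      simp only [coe_filter, Set.mem_ofPred_eq] at hv ⊢
      refine ⟨hS v hv.1, ?_⟩
      rw [← isDescentTop_negRotate_neg (hne _ (hS v hv.1)), neg_neg]
      exact hv.2
    · intro v hv
      simp only [coe_filter, Set.mem_ofPred_eq] at hv ⊢
      exact ⟨hS v hv.1, (isDescentTop_negRotate_neg (hne v hv.1)).mpr hv.2⟩
  rw [hneg, add_comm, card_filter_add_card_filter_not]

end NegRotate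

theorem card_even_succ (n : ℕ) : #{v : Fin (2 * n) | Even ((v : ℕ) + 1)} = n := by
  have := Nat.card_multiples (2 * n) 2
  rw [← Nat.Iio_eq_range, ← Fin.map_valEmbedding_univ, filter_map, card_map] at this
  simpa [even_iff_two_dvd] using this

open Classical in
theorem desBegE_eq_card_isDescentTop {m : ℕ} (σ : Perm (Fin m)) :
    desBegE m σ = #{v ∈ {v : Fin m | Even ((v : ℕ) + 1)} | IsDescentTop σ v} := by
  rw [desBegE, card_descents_eq_card_isDescentTop (fun v : Fin m => Even ((v : ℕ) + 1)),
    filter_filter]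

theorem desBegE_negRotate_add {n : ℕ} [NeZero (2 * n)] (σ : Perm (Fin (2 * n))) :
    desBegE (2 * n) (negRotate σ) + desBegE (2 * n) σ = n := by
  rw [desBegE_eq_card_isDescentTop, desBegE_eq_card_isDescentTop,
    card_isDescentTop_negRotate_add, card_even_succ]
  · simp
  · intro v hv
    simp only [mem_filter, mem_univ, true_and] at hv ⊢
    have hv0 : (v : ℕ) ≠ 0 := by rintro h; simp [h] at hv
    rw [Nat.even_iff] at hv
    rw [Fin.val_neg', Nat.mod_eq_of_lt (by omega), Nat.even_iff]
    omega

theorem stmt_19 (n k : ℕ) (hn : 1 ≤ n) (hk : k ≤ n) :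
    R k (2*n) = R (n-k) (2*n) := by
  have : NeZero (2 * n) := ⟨by omega⟩
  unfold R
  refine card_nbij' negRotate negRotate ?_ ?_ (fun σ _ => negRotate_negRotate σ)
    (fun σ _ => negRotate_negRotate σ) <;>
  · intro σ hσ
    simp only [coe_filter, mem_univ, true_and, Set.mem_ofPred_eq] at hσ ⊢
    have := desBegE_negRotate_add σ
    omega

end DescentParity
end
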